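/- arXiv:2604.11212 — 6 statements merged into one kernel-verified Lean document; each statement's English description precedes it below -/
import Mathlib

section
/- Let W be an n-dimensional vector space over a field, and let U_1,...,U_m and V_1,...,V_m be subspaces of W. Suppose there exists an integer t ≥ 0 such that dim(U_i ∩ V_i) ≤ t for all 1 ≤ i ≤ m, and dim(U_i ∩ V_j) > t for all 1 ≤ i < j ≤ m. Then m ≤ 2^(n-t). -/
open Module Submodule ExteriorAlgebra TensorProduct


theorem exists_dual_form {F N : Type*} [Field F] [AddCommGroup N] [Module F N]
    {a : ℕ} (w : Fin a → N) (h : LinearIndependent F w) :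
    ∃ φ : N [⋀^Fin a]→ₗ[F] F, φ w ≠ 0 := by
  set S := span F (Set.range w)
  obtain ⟨C, hC⟩ := Submodule.exists_isCompl S
  set bS : Basis (Fin a) F S := Basis.span h
  refine ⟨(bS.det).compLinearMap (Submodule.linearProjOfIsCompl S C hC), ?_⟩
  have : (fun i => Submodule.linearProjOfIsCompl S C hC (w i)) = bS := by
    funext i
    rw [show w i = (bS i : N) from congrArg Subtype.val (Basis.span_apply h i).symm]
    exact Submodule.linearProjOfIsCompl_apply_left hC (bS i)
  rw [AlternatingMap.compLinearMap_apply, this, Basis.det_self]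
  exact one_ne_zero

theorem li_of_triangular {F E : Type*} [Field F] [AddCommGroup E] [Module F E] {m : ℕ}
    (x : Fin m → E) (g : Fin m → (E →ₗ[F] F))
    (h1 : ∀ j, g j (x j) ≠ 0) (h2 : ∀ i j : Fin m, i < j → g j (x i) = 0) :
    LinearIndependent F x := by
  rw [Fintype.linearIndependent_iff]
  intro c hc
  have key : ∀ j : Fin m, (∀ k, j < k → c k = 0) → c j = 0 := by
    intro j hk
    have h0 : (0:F) = g j (∑ i, c i • x i) := by rw [hc]; simp
    rw [map_sum] at h0
    have hs : ∀ i ∈ Finset.univ, i ≠ j → g j (c i • x i) = 0 := by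
      intro i _ hij
      rcases lt_or_gt_of_ne hij with h | h
      · rw [map_smul, h2 i j h, smul_zero]
      · rw [hk i h, zero_smul, map_zero]
    rw [Finset.sum_eq_single j hs (fun h => absurd (Finset.mem_univ j) h)] at h0
    rw [map_smul, smul_eq_mul] at h0
    rcases mul_eq_zero.mp h0.symm with h | h
    · exact h
    · exact absurd h (h1 j)
  have main : ∀ N : ℕ, ∀ j : Fin m, m - (j:ℕ) ≤ N → c j = 0 := by
    intro N
    induction N with
    | zero => intro j hj; exact absurd hj (by have := j.2; omega)
    | succ N ih =>
      intro j hj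
      refine key j (fun k hk => ih k ?_)
      have := j.2; have := k.2
      omega
  exact fun i => main m i (by omega)

theorem wedge_mem_span {F E : Type*} [Field F] [AddCommGroup E] [Module F E]
    {d : ℕ} (b : Basis (Fin d) F E) (k : ℕ) (v : Fin k → E) :
    ιMulti F k v ∈ span F (Set.range (fun s : {s : Finset (Fin d) // s.card = k} =>
      ιMulti F k (M := E) (fun i => b ((s.1.orderIsoOfFin s.2) i)))) := by
  classical
  set P := span F (Set.range (fun s : {s : Finset (Fin d) // s.card = k} =>
      ιMulti F k (M := E) (fun i => b ((s.1.orderIsoOfFin s.2) i)))) with hP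
  have step1 : ιMulti F k v
      = ∑ r : Fin k → Fin d, (∏ i, b.repr (v i) (r i)) • ιMulti F k (fun i => b (r i)) := by
    conv_lhs => rw [show v = fun i => ∑ j, b.repr (v i) j • b j from
      funext fun i => (b.sum_repr (v i)).symm]
    have h1 := (ιMulti F k (M := E)).toMultilinearMap.map_sum
      (g := fun (i : Fin k) (j : Fin d) => b.repr (v i) j • b j)
    simp only [AlternatingMap.coe_multilinearMap] at h1
    rw [h1]
    refine Finset.sum_congr rfl (fun r _ => ?_)
    have h2 := (ιMulti F k (M := E)).toMultilinearMap.map_smul_univ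
      (fun i => b.repr (v i) (r i)) (fun i => b (r i))
    simpa using h2
  rw [step1]
  refine Submodule.sum_mem _ (fun r _ => Submodule.smul_mem _ _ ?_)
  by_cases hinj : Function.Injective r
  · set s : Finset (Fin d) := Finset.image r Finset.univ with hsdef
    have hs : s.card = k := by
      rw [hsdef, Finset.card_image_of_injective _ hinj, Finset.card_univ, Fintype.card_fin]
    have hmem : ∀ i, r i ∈ s := fun i => Finset.mem_image.mpr ⟨i, Finset.mem_univ i, rfl⟩
    set σf : Fin k → Fin k := fun i => (s.orderIsoOfFin hs).symm ⟨r i, hmem i⟩ with hσf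
    have hσinj : Function.Injective σf := by
      intro i j hij
      apply hinj
      have := congrArg (fun z => ((s.orderIsoOfFin hs) z : Fin d)) hij
      simpa [hσf] using this
    have hbij := (Finite.injective_iff_bijective).mp hσinj
    set σ : Equiv.Perm (Fin k) := Equiv.ofBijective σf hbij with hσ
    have hcomp : ((fun i => b ((s.orderIsoOfFin hs) i)) ∘ σ) = fun i => b (r i) := by
      funext i
      simp only [hσ, hσf, Function.comp_apply, Equiv.ofBijective_apply]
      congr 1
      exact congrArg Subtype.val ((s.orderIsoOfFin hs).apply_symm_apply ⟨r i, hmem i⟩)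
    have hperm := (ιMulti F k (M := E)).map_perm (fun i => b ((s.orderIsoOfFin hs) i)) σ
    rw [hcomp] at hperm
    rw [hperm]
    have hbase : ιMulti F k (M := E) (fun i => b ((s.orderIsoOfFin hs) i)) ∈ P :=
      subset_span ⟨⟨s, hs⟩, rfl⟩
    rcases Int.units_eq_one_or (Equiv.Perm.sign σ) with h | h <;> rw [h]
    · simpa using hbase
    · simpa using Submodule.neg_mem _ hbase
  · obtain ⟨i, j, hij, hne⟩ := Function.not_injective_iff.mp hinj
    rw [AlternatingMap.map_eq_zero_of_eq _ _ (by rw [hij]) hne]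
    exact Submodule.zero_mem _

set_option synthInstance.maxHeartbeats 1000000 in
theorem skew_zero {F E : Type*} [Field F] [AddCommGroup E] [Module F E]
    [FiniteDimensional F E] {d m : ℕ} (hd : Module.finrank F E = d)
    (U V : Fin m → Submodule F E)
    (hdiag : ∀ i, U i ⊓ V i = ⊥)
    (hskew : ∀ i j : Fin m, i < j → U i ⊓ V j ≠ ⊥) :
    m ≤ 2 ^ d := by
  classical
  set b : Basis (Fin d) F E := (Module.finBasis F E).reindex (finCongr hd) with hb
  set a : Fin m → ℕ := fun i => finrank F (U i) with ha
  set u : (i : Fin m) → Fin (a i) → E := fun i k => ((Module.finBasis F (U i)) k : E) with hu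
  have hu_li : ∀ i, LinearIndependent F (u i) := fun i =>
    ((Module.finBasis F (U i)).linearIndependent).map' (U i).subtype (ker_subtype _)
  have hu_span : ∀ i, span F (Set.range (u i)) = U i := by
    intro i
    have h1 : Set.range (u i) = (U i).subtype '' Set.range (Module.finBasis F (U i)) := by
      rw [← Set.range_comp]; rfl
    rw [h1, Submodule.span_image, Basis.span_eq, Submodule.map_subtype_top]
  set x : Fin m → ExteriorAlgebra F E := fun i => ιMulti F (a i) (u i) with hx
  -- triangular functionals
  have hgex : ∀ j : Fin m, ∃ g : ExteriorAlgebra F E →ₗ[F] F,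
      g (x j) ≠ 0 ∧ ∀ i, i < j → g (x i) = 0 := by
    intro j
    set π : E →ₗ[F] (E ⧸ V j) := (V j).mkQ with hπ
    set Q := ExteriorAlgebra.map π with hQ
    have hwj : LinearIndependent F (π ∘ u j) := by
      refine (hu_li j).map ?_
      rw [hu_span, Submodule.ker_mkQ]
      exact disjoint_iff.mpr (hdiag j)
    obtain ⟨φ, hφ⟩ := exists_dual_form (π ∘ u j) hwj
    refine ⟨(liftAlternating (R := F) (Pi.single (a j) φ)) ∘ₗ Q.toLinearMap, ?_, ?_⟩
    · have hQx : Q (x j) = ιMulti F (a j) (π ∘ u j) := by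
        rw [hx, hQ]; exact ExteriorAlgebra.map_apply_ιMulti π (u j)
      simp only [LinearMap.coe_comp, Function.comp_apply, AlgHom.toLinearMap_apply, hQx,
        liftAlternating_apply_ιMulti, Pi.single_eq_same]
      exact hφ
    · intro i hij
      have hdep : ¬ LinearIndependent F (π ∘ u i) := by
        intro hli
        obtain ⟨w, hwmem, hwne⟩ := Submodule.ne_bot_iff _ |>.mp (hskew i j hij)
        obtain ⟨c, hc⟩ := mem_span_range_iff_exists_fun F |>.mp
          (by rw [hu_span]; exact hwmem.1 : w ∈ span F (Set.range (u i)))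
        have hπw : π w = 0 := by
          rw [hπ, Submodule.mkQ_apply, Submodule.Quotient.mk_eq_zero]
          exact hwmem.2
        have hsum : ∑ k, c k • (π ∘ u i) k = 0 := by
          simp only [Function.comp_apply, ← map_smul, ← map_sum, hc, hπw]
        have := Fintype.linearIndependent_iff.mp hli c hsum
        apply hwne
        rw [← hc]
        simp [this]
      have hQx : Q (x i) = ιMulti F (a i) (π ∘ u i) := by
        rw [hx, hQ]; exact ExteriorAlgebra.map_apply_ιMulti π (u i)
      simp only [LinearMap.coe_comp, Function.comp_apply, AlgHom.toLinearMap_apply, hQx,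
        AlternatingMap.map_linearDependent _ _ hdep, map_zero]
  choose g hg1 hg2 using hgex
  -- degree-k spans
  set Pdeg : ℕ → Submodule F (ExteriorAlgebra F E) := fun k =>
    span F (Set.range (fun s : {s : Finset (Fin d) // s.card = k} =>
      ιMulti F k (M := E) (fun q => b ((s.1.orderIsoOfFin s.2) q)))) with hPdeg
  have hxmem : ∀ i, x i ∈ Pdeg (a i) := fun i => wedge_mem_span b (a i) (u i)
  have hPfin : ∀ k, FiniteDimensional F (Pdeg k) := fun k =>
    FiniteDimensional.span_of_finite F (Set.finite_range _)
  have hPrank : ∀ k, finrank F (Pdeg k) ≤ d.choose k := by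
    intro k
    have h1 := finrank_range_le_card (R := F)
      (fun s : {s : Finset (Fin d) // s.card = k} =>
        ιMulti F k (M := E) (fun q => b ((s.1.orderIsoOfFin s.2) q)))
    have h2 : Fintype.card {s : Finset (Fin d) // s.card = k} = d.choose k := by
      rw [Fintype.card_finset_len, Fintype.card_fin]
    rw [h2] at h1
    exact h1
  -- counting
  have habound : ∀ i, a i ≤ d := by
    intro i
    rw [ha, ← hd]
    exact Submodule.finrank_le (U i)
  have hcount : (Finset.univ : Finset (Fin m)).card
      = ∑ k ∈ Finset.range (d+1), (Finset.univ.filter (fun i => a i = k)).card :=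
    Finset.card_eq_sum_card_fiberwise
      (fun i _ => Finset.mem_range.mpr (Nat.lt_succ_of_le (habound i)))
  have hm : m = (Finset.univ : Finset (Fin m)).card := by simp
  rw [hm, hcount, ← Nat.sum_range_choose d]
  refine Finset.sum_le_sum (fun k _ => ?_)
  -- bound each fiber
  set S := Finset.univ.filter (fun i : Fin m => a i = k) with hS
  set e : Fin S.card ≃o {i // i ∈ S} := S.orderIsoOfFin rfl with he
  have hmemS : ∀ q : Fin S.card, a (e q).1 = k := by
    intro q
    exact (Finset.mem_filter.mp (e q).2).2
  have hxmem' : ∀ q : Fin S.card, x (e q).1 ∈ Pdeg k := by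
    intro q
    have := hxmem (e q).1
    rwa [hmemS q] at this
  set z : Fin S.card → Pdeg k := fun q => ⟨x (e q).1, hxmem' q⟩ with hz
  have hzli : LinearIndependent F z := by
    have hxli : LinearIndependent F (fun q : Fin S.card => x (e q).1) := by
      refine li_of_triangular _ (fun q => g (e q).1) (fun q => hg1 _) ?_
      intro p q hpq
      exact hg2 _ _ (by exact_mod_cast e.strictMono hpq)
    exact LinearIndependent.of_comp (Pdeg k).subtype (by exact hxli)
  have := hzli.fintype_card_le_finrank
  rw [Fintype.card_fin] at this
  exact this.trans (hPrank k)

theorem finrank_baseChange_eq {K W : Type*} [Field K] [AddCommGroup W] [Module K W]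
    [FiniteDimensional K W] (L : Type*) [Field L] [Algebra K L] (p : Submodule K W) :
    Module.finrank L (p.baseChange L) = Module.finrank K p := by
  classical
  set r := finrank K p with hr
  set v : Basis (Fin r) K p := Module.finBasis K p
  set vv : Fin r → W := fun k => (v k : W) with hvv
  have hspan : p = span K (Set.range vv) := by
    have h1 : Set.range vv = p.subtype '' Set.range v := by rw [← Set.range_comp]; rfl
    rw [h1, Submodule.span_image, Basis.span_eq, Submodule.map_subtype_top]
  have hbc : p.baseChange L = span L (Set.range (fun k => (1:L) ⊗ₜ[K] vv k)) := by
    rw [hspan, Submodule.baseChange_span, ← Set.range_comp]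
    rfl
  -- independence of the tensored family
  obtain ⟨C, hC⟩ := Submodule.exists_isCompl p
  set pr : W →ₗ[K] p := Submodule.linearProjOfIsCompl p C hC
  set f : W →ₗ[K] (Fin r → K) := (v.equivFun.toLinearMap) ∘ₗ pr with hf
  set g := f.baseChange L with hg
  have hgk : ∀ k, g ((1:L) ⊗ₜ[K] vv k) = (Pi.basisFun K (Fin r)).baseChange L k := by
    intro k
    rw [hg, LinearMap.baseChange_tmul, Basis.baseChange_apply]
    congr 1
    rw [hf]
    simp only [LinearMap.coe_comp, Function.comp_apply]
    have h1 : pr (vv k) = v k := Submodule.linearProjOfIsCompl_apply_left hC (v k)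
    rw [h1]
    simp [Basis.equivFun_apply, Pi.basisFun_apply]
    ext j
    simp [Basis.repr_self, Finsupp.single_apply, Pi.single_apply, eq_comm]
  have hli : LinearIndependent L (fun k => (1:L) ⊗ₜ[K] vv k) := by
    apply LinearIndependent.of_comp g
    have : (g ∘ fun k => (1:L) ⊗ₜ[K] vv k) = (Pi.basisFun K (Fin r)).baseChange L := by
      funext k; exact hgk k
    rw [this]
    exact ((Pi.basisFun K (Fin r)).baseChange L).linearIndependent
  rw [hbc, finrank_span_eq_card hli, Fintype.card_fin]


theorem exists_avoiding {F E : Type*} [Field F] [Infinite F] [AddCommGroup E] [Module F E]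
    [FiniteDimensional F E] {m t n : ℕ} (hn : Module.finrank F E = n) (D : Fin m → Submodule F E)
    (hD : ∀ i, finrank F (D i) ≤ t) :
    ∀ k : ℕ, k + t ≤ n → ∃ X : Submodule F E, finrank F X = k ∧ ∀ i, X ⊓ D i = ⊥ := by
  intro k
  induction k with
  | zero => exact fun _ => ⟨⊥, finrank_bot F E, fun i => bot_inf_eq _⟩
  | succ k ih =>
    intro hk
    obtain ⟨X, hXrank, hXavoid⟩ := ih (by omega)
    set q : Fin (m+1) → Submodule F E := Fin.cons X (fun i => X ⊔ D i) with hq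
    have hproper : ∀ j, q j ≠ ⊤ := by
      intro j
      have hfr : finrank F (q j) < n := by
        refine Fin.cases ?_ ?_ j
        · show finrank F X < n; omega
        · intro i
          show finrank F ↥(X ⊔ D i) < n
          have h1 : finrank F ((X ⊔ D i : Submodule F E)) ≤ finrank F X + finrank F (D i) := by
            have := Submodule.finrank_sup_add_finrank_inf_eq X (D i)
            omega
          have := hD i
          omega
      intro htop
      rw [htop, finrank_top, hn] at hfr
      omega
    have hcover : (⋃ j, (q j : Set E)) ≠ Set.univ := by
      intro hcov
      obtain ⟨j, hj⟩ := Subspace.exists_eq_top_of_iUnion_eq_univ hcov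
      exact hproper j hj
    obtain ⟨v, hv⟩ := Set.ne_univ_iff_exists_notMem _ |>.mp hcover
    simp only [Set.mem_iUnion, not_exists, SetLike.mem_coe] at hv
    have hvX : v ∉ X := by
      have := hv 0
      simpa [hq] using this
    have hvXD : ∀ i, v ∉ X ⊔ D i := by
      intro i
      have := hv i.succ
      simpa [hq] using this
    have hv0 : v ≠ 0 := fun h => hvX (h ▸ Submodule.zero_mem X)
    refine ⟨X ⊔ span F {v}, ?_, ?_⟩
    · have hdisj : X ⊓ span F {v} = ⊥ := by
        exact disjoint_iff.mp ((Submodule.disjoint_span_singleton' hv0).mpr hvX)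
      have := Submodule.finrank_sup_add_finrank_inf_eq X (span F {v})
      rw [hdisj, finrank_bot, finrank_span_singleton hv0] at this
      omega
    · intro i
      rw [eq_bot_iff]
      rintro w ⟨hw1, hw2⟩
      obtain ⟨y, hy, z, hz, rfl⟩ := Submodule.mem_sup.mp hw1
      obtain ⟨c, rfl⟩ := Submodule.mem_span_singleton.mp hz
      rcases eq_or_ne c 0 with rfl | hc
      · rw [zero_smul, add_zero] at hw2 ⊢
        have : y ∈ X ⊓ D i := ⟨hy, hw2⟩
        rw [hXavoid i] at this
        exact this
      · exfalso
        apply hvXD i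
        have h1 : (y + c • v) - y ∈ X ⊔ D i :=
          Submodule.sub_mem _ (Submodule.mem_sup_right hw2) (Submodule.mem_sup_left hy)
        have h2 : c • v ∈ X ⊔ D i := by simpa using h1
        have := Submodule.smul_mem _ c⁻¹ h2
        rwa [inv_smul_smul₀ hc] at this


section helpers
variable {K W : Type*} [Field K] [AddCommGroup W] [Module K W] [FiniteDimensional K W]
  (L : Type*) [Field L] [Algebra K L]

omit [FiniteDimensional K W] in
theorem baseChange_sup' (p q : Submodule K W) :
    (p ⊔ q).baseChange L = p.baseChange L ⊔ q.baseChange L := by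
  refine le_antisymm ?_ (sup_le ?_ ?_)
  · rw [Submodule.baseChange_eq_span, Submodule.span_le]
    rintro x ⟨w, hw, rfl⟩
    obtain ⟨y, hy, z, hz, rfl⟩ := Submodule.mem_sup.mp hw
    have : (TensorProduct.mk K L W 1) (y + z) = (1:L) ⊗ₜ[K] y + (1:L) ⊗ₜ[K] z := by
      simp [TensorProduct.tmul_add]
    rw [this]
    exact Submodule.add_mem _
      (Submodule.mem_sup_left (Submodule.tmul_mem_baseChange_of_mem _ hy))
      (Submodule.mem_sup_right (Submodule.tmul_mem_baseChange_of_mem _ hz))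
  · simp only [Submodule.baseChange_eq_span]
    exact Submodule.span_mono (Set.image_mono (fun w hw => Submodule.mem_sup_left hw))
  · simp only [Submodule.baseChange_eq_span]
    exact Submodule.span_mono (Set.image_mono (fun w hw => Submodule.mem_sup_right hw))

theorem finrank_inf_baseChange (p q : Submodule K W)
    [FiniteDimensional L (L ⊗[K] W)] :
    finrank L ↥(p.baseChange L ⊓ q.baseChange L) = finrank K ↥(p ⊓ q) := by
  have h1 := Submodule.finrank_sup_add_finrank_inf_eq (p.baseChange L) (q.baseChange L)
  have h2 := Submodule.finrank_sup_add_finrank_inf_eq p q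
  rw [← baseChange_sup' L p q] at h1
  rw [finrank_baseChange_eq, finrank_baseChange_eq, finrank_baseChange_eq] at h1
  omega
end helpers

theorem hegedus_frankl_skew
    (K : Type*) [Field K] (W : Type*) [AddCommGroup W] [Module K W]
    [FiniteDimensional K W] (n m t : ℕ) (hW : Module.finrank K W = n)
    (U V : Fin m → Submodule K W)
    (hdiag : ∀ i : Fin m, Module.finrank K ↥(U i ⊓ V i) ≤ t)
    (hskew : ∀ i j : Fin m, i < j → t < Module.finrank K ↥(U i ⊓ V j)) :
    m ≤ 2 ^ (n - t) := by
  rcases Nat.lt_or_ge m 2 with hm | hm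
  · calc m ≤ 1 := by omega
      _ ≤ 2 ^ (n - t) := Nat.one_le_two_pow
  · have htn : t < n := by
      have h01 : (⟨0, by omega⟩ : Fin m) < ⟨1, by omega⟩ := by simp [Fin.lt_def]
      have h1 := hskew _ _ h01
      have h2 : finrank K ↥(U ⟨0, by omega⟩ ⊓ V ⟨1, by omega⟩) ≤ n := hW ▸ Submodule.finrank_le _
      omega
    set L := RatFunc K with hL
    haveI : Infinite L :=
      Infinite.of_injective (algebraMap (Polynomial K) (RatFunc K))
        (RatFunc.algebraMap_injective K)
    set E := L ⊗[K] W with hE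
    haveI : FiniteDimensional L E := Module.Finite.base_change K L W
    have hErank : finrank L E = n := by
      have h := Module.finrank_baseChange (R := L) (S := K) (M' := W)
      rw [hW] at h
      exact h
    set Up : Fin m → Submodule L E := fun i => (U i).baseChange L with hUp
    set Vp : Fin m → Submodule L E := fun i => (V i).baseChange L with hVp
    set D : Fin m → Submodule L E := fun i => Up i ⊓ Vp i with hD
    have hDrank : ∀ i, finrank L (D i) ≤ t := by
      intro i
      rw [hD]
      show finrank L ↥((U i).baseChange L ⊓ (V i).baseChange L) ≤ t
      rw [finrank_inf_baseChange]
      exact hdiag i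
    obtain ⟨X, hXrank, hXavoid⟩ := exists_avoiding hErank D hDrank (n - t) (by omega)
    -- restrict to X
    set U'' : Fin m → Submodule L ↥X := fun i => Submodule.comap X.subtype (Up i) with hU''
    set V'' : Fin m → Submodule L ↥X := fun i => Submodule.comap X.subtype (Vp i) with hV''
    refine skew_zero hXrank U'' V'' ?_ ?_
    · intro i
      rw [hU'', hV'']
      show Submodule.comap X.subtype (Up i) ⊓ Submodule.comap X.subtype (Vp i) = ⊥
      rw [← Submodule.comap_inf, eq_bot_iff]
      rintro x hx
      have hxX : (x : E) ∈ X := x.2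
      have : (x : E) ∈ X ⊓ D i := ⟨hxX, hx⟩
      rw [hXavoid i] at this
      exact Subtype.ext this
    · intro i j hij
      show Submodule.comap X.subtype (Up i) ⊓ Submodule.comap X.subtype (Vp j) ≠ ⊥
      rw [← Submodule.comap_inf]
      set S := Up i ⊓ Vp j with hS
      have hfr : t < finrank L S := by
        rw [hS]
        show t < finrank L ↥((U i).baseChange L ⊓ (V j).baseChange L)
        rw [finrank_inf_baseChange]
        exact hskew i j hij
      have hXS : X ⊓ S ≠ ⊥ := by
        intro hbot
        have h1 := Submodule.finrank_sup_add_finrank_inf_eq X S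
        rw [hbot, finrank_bot] at h1
        have h2 : finrank L ↥(X ⊔ S) ≤ n := hErank ▸ Submodule.finrank_le _
        omega
      obtain ⟨w, ⟨hwX, hwS⟩, hwne⟩ := Submodule.ne_bot_iff _ |>.mp hXS
      rw [Submodule.ne_bot_iff]
      refine ⟨⟨w, hwX⟩, hwS, ?_⟩
      intro h
      exact hwne (congrArg Subtype.val h)
end

section
/- Let S be a set of n×n real matrices, each of rank r, such that every sufficiently long product of elements of S has rank at most r-1 (i.e., there is a bound on the length of products of elements of S having rank r). Then every product of 2^(n+1) elements of S has rank at most r-1. -/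
open Module Submodule ExteriorAlgebra

variable {n : ℕ}



/-- A wedge of linearly independent vectors is nonzero. -/
lemma iotaMulti_ne_zero {r : ℕ} (v : Fin r → (Fin n → ℝ)) (hv : LinearIndependent ℝ v) :
    ExteriorAlgebra.ιMulti ℝ r v ≠ 0 := by
  classical
  obtain ⟨q, hq⟩ := Submodule.exists_isCompl (span ℝ (Set.range v))
  set b : Basis (Fin r) ℝ (span ℝ (Set.range v)) := Basis.span hv with hb
  set f : (Fin n → ℝ) →ₗ[ℝ] (Fin r → ℝ) :=
    (b.equivFun.toLinearMap).comp (Submodule.projectionOnto _ q hq) with hfdef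
  have hf : ∀ i, f (v i) = Pi.single i 1 := by
    intro i
    have hmem : v i ∈ span ℝ (Set.range v) := subset_span (Set.mem_range_self i)
    have h1 : (Submodule.projectionOnto _ q hq) (v i) = b i := by
      have := Submodule.linearProjOfIsCompl_apply_left hq ⟨v i, hmem⟩
      rw [show v i = ((⟨v i, hmem⟩ : span ℝ (Set.range v)) : Fin n → ℝ) from rfl, this]
      ext
      simp [hb, Basis.span_apply]
    have h2 : b.equivFun (b i) = Pi.single i 1 := by
      ext j
      rw [Basis.equivFun_apply, b.repr_self]
      simp [Finsupp.single_apply, Pi.single_apply, eq_comm]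
    simp [hfdef, h1, h2]
  set F : (Fin n → ℝ) [⋀^Fin r]→ₗ[ℝ] ℝ := (Matrix.detRowAlternating).compLinearMap f with hF
  have hFv : F v = 1 := by
    have : (Matrix.of fun i => f (v i)) = (1 : Matrix (Fin r) (Fin r) ℝ) := by
      ext i j
      rw [Matrix.of_apply, hf i, Matrix.one_apply, Pi.single_apply]
      simp [eq_comm]
    simp only [hF, AlternatingMap.compLinearMap_apply, Matrix.detRowAlternating]
    show Matrix.det (Matrix.of fun i => f (v i)) = 1
    rw [this, Matrix.det_one]
  intro h0
  have := congrArg (ExteriorAlgebra.liftAlternating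
    (Function.update (fun _ => 0) r F)) h0
  rw [ExteriorAlgebra.liftAlternating_apply_ιMulti, Function.update_self, map_zero, hFv] at this
  exact one_ne_zero this

/-- A wedge of linearly dependent vectors is zero. -/
lemma iotaMulti_eq_zero {r : ℕ} (v : Fin r → (Fin n → ℝ)) (hv : ¬ LinearIndependent ℝ v) :
    ExteriorAlgebra.ιMulti ℝ r v = 0 :=
  AlternatingMap.map_linearDependent _ v hv



lemma wedge_mem_span_g {r : ℕ} (v : Fin r → (Fin n → ℝ)) :
    ExteriorAlgebra.ιMulti ℝ r v ∈ span ℝ (Set.range (fun s : Finset (Fin n) =>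
      if h : s.card = r then
        ExteriorAlgebra.ιMulti ℝ r (fun i => (Pi.single ((s.orderIsoOfFin h) i) 1 : Fin n → ℝ))
      else 0)) := by
  classical
  set g : Finset (Fin n) → ExteriorAlgebra ℝ (Fin n → ℝ) := fun s =>
    if h : s.card = r then
      ExteriorAlgebra.ιMulti ℝ r (fun i => (Pi.single ((s.orderIsoOfFin h) i) 1 : Fin n → ℝ))
    else 0 with hg
  have hv' : v = fun i => ∑ k : Fin n, v i k • (Pi.single k 1 : Fin n → ℝ) := by
    funext i; ext j; simp [Pi.single_apply, eq_comm]
  have hexp : ExteriorAlgebra.ιMulti ℝ r v =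
      ∑ σ : Fin r → Fin n, (∏ i, v i (σ i)) •
        ExteriorAlgebra.ιMulti ℝ r (fun i => (Pi.single (σ i) 1 : Fin n → ℝ)) := by
    calc ExteriorAlgebra.ιMulti ℝ r v
        = (ExteriorAlgebra.ιMulti ℝ r).toMultilinearMap
            (fun i => ∑ k : Fin n, v i k • (Pi.single k 1 : Fin n → ℝ)) := by
          rw [← hv']; rfl
      _ = ∑ σ : Fin r → Fin n, (ExteriorAlgebra.ιMulti ℝ r).toMultilinearMap
            (fun i => v i (σ i) • (Pi.single (σ i) 1 : Fin n → ℝ)) :=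
          MultilinearMap.map_sum _ _
      _ = ∑ σ : Fin r → Fin n, (∏ i, v i (σ i)) •
            ExteriorAlgebra.ιMulti ℝ r (fun i => (Pi.single (σ i) 1 : Fin n → ℝ)) := by
          refine Finset.sum_congr rfl fun σ _ => ?_
          exact MultilinearMap.map_smul_univ _ _ _
  rw [hexp]
  refine Submodule.sum_mem _ fun σ _ => Submodule.smul_mem _ _ ?_
  by_cases hσ : Function.Injective σ
  · set s : Finset (Fin n) := Finset.image σ Finset.univ with hs
    have hcard : s.card = r := by
      rw [hs, Finset.card_image_of_injective _ hσ, Finset.card_univ, Fintype.card_fin]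
    have hmem : ∀ i, σ i ∈ s := fun i => Finset.mem_image_of_mem σ (Finset.mem_univ i)
    set π : Fin r → Fin r := fun i => (s.orderIsoOfFin hcard).symm ⟨σ i, hmem i⟩ with hπ
    have hπinj : Function.Injective π := by
      intro i j hij
      have h2 : (s.orderIsoOfFin hcard).symm ⟨σ i, hmem i⟩
          = (s.orderIsoOfFin hcard).symm ⟨σ j, hmem j⟩ := hij
      have h3 : (⟨σ i, hmem i⟩ : {x // x ∈ s}) = ⟨σ j, hmem j⟩ :=
        (s.orderIsoOfFin hcard).symm.injective h2
      exact hσ (congrArg Subtype.val h3)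
    have hπbij : Function.Bijective π := (Finite.injective_iff_bijective).mp hπinj
    set πe : Equiv.Perm (Fin r) := Equiv.ofBijective π hπbij with hπe
    have hcomp : (fun i => (Pi.single (σ i) 1 : Fin n → ℝ)) =
        (fun i : Fin r => (Pi.single ((s.orderIsoOfFin hcard) i) 1 : Fin n → ℝ)) ∘ πe := by
      funext i
      simp only [Function.comp_apply, hπe, Equiv.ofBijective_apply, hπ,
        OrderIso.apply_symm_apply]
    rw [hcomp, AlternatingMap.map_perm]
    have hws : ExteriorAlgebra.ιMulti ℝ r
        (fun i : Fin r => (Pi.single ((s.orderIsoOfFin hcard) i) 1 : Fin n → ℝ))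
        ∈ span ℝ (Set.range g) := subset_span ⟨s, dif_pos hcard⟩
    rcases Int.units_eq_one_or (Equiv.Perm.sign πe) with h | h <;> rw [h]
    · simpa using hws
    · simpa using Submodule.neg_mem _ hws
  · rw [Function.not_injective_iff] at hσ
    obtain ⟨i, j, hij, hne⟩ := hσ
    have hz : ExteriorAlgebra.ιMulti ℝ r (fun i => (Pi.single (σ i) 1 : Fin n → ℝ)) = 0 :=
      AlternatingMap.map_eq_zero_of_eq _ _ (by rw [hij]) hne
    rw [hz]
    exact Submodule.zero_mem _

lemma card_le_of_indep {N r : ℕ} (ω : Fin N → ExteriorAlgebra ℝ (Fin n → ℝ))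
    (hmem : ∀ i, ω i ∈ span ℝ (Set.range (ExteriorAlgebra.ιMulti ℝ r (M := Fin n → ℝ))))
    (hind : LinearIndependent ℝ ω) : N ≤ 2 ^ n := by
  classical
  set g : Finset (Fin n) → ExteriorAlgebra ℝ (Fin n → ℝ) := fun s =>
    if h : s.card = r then
      ExteriorAlgebra.ιMulti ℝ r (fun i => (Pi.single ((s.orderIsoOfFin h) i) 1 : Fin n → ℝ))
    else 0 with hg
  set p : Submodule ℝ (ExteriorAlgebra ℝ (Fin n → ℝ)) := span ℝ (Set.range g) with hp
  have hle : span ℝ (Set.range (ExteriorAlgebra.ιMulti ℝ r (M := Fin n → ℝ))) ≤ p := by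
    rw [span_le]
    rintro x ⟨v, rfl⟩
    exact wedge_mem_span_g v
  haveI : Module.Finite ℝ p := Module.Finite.span_of_finite ℝ (Set.finite_range g)
  set ω' : Fin N → p := fun i => ⟨ω i, hle (hmem i)⟩ with hω'
  have hind' : LinearIndependent ℝ ω' := by
    apply LinearIndependent.of_comp p.subtype
    convert hind
    rfl
  have h1 : N ≤ finrank ℝ p := by
    simpa using hind'.fintype_card_le_finrank
  have h2 : finrank ℝ p ≤ 2 ^ n := by
    have hrg : Set.range g = ((Finset.univ.image g : Finset _) : Set _) := by simp
    rw [hp, hrg]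
    refine le_trans (finrank_span_finset_le_card _) ?_
    refine le_trans (Finset.card_image_le) ?_
    simp [Fintype.card_finset]
  omega



/-- Vectors with a "triangular" system of functionals are linearly independent. -/
lemma indep_of_triangular {N : ℕ} {E : Type*} [AddCommGroup E] [Module ℝ E]
    (ω : Fin N → E) (ψ : Fin N → (E →ₗ[ℝ] E))
    (h0 : ∀ i : Fin N, (i : ℕ) = 0 → ω i ≠ 0)
    (hz : ∀ i j : Fin N, (j : ℕ) ≤ (i : ℕ) → ψ i (ω j) = 0)
    (hs : ∀ i j : Fin N, (j : ℕ) = (i : ℕ) + 1 → ψ i (ω j) ≠ 0) :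
    LinearIndependent ℝ ω := by
  rw [Fintype.linearIndependent_iff]
  intro c hc
  by_contra hne
  push_neg at hne
  obtain ⟨i₀, hi₀⟩ := hne
  have hnonempty : (Finset.univ.filter (fun i => c i ≠ 0)).Nonempty :=
    ⟨i₀, by simp [hi₀]⟩
  set i := (Finset.univ.filter (fun i => c i ≠ 0)).max' hnonempty with hi
  have hci : c i ≠ 0 := by
    have := (Finset.univ.filter (fun i => c i ≠ 0)).max'_mem hnonempty
    simpa using this
  have hmax : ∀ j, c j ≠ 0 → (j : ℕ) ≤ (i : ℕ) := by
    intro j hj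
    exact Finset.le_max' _ j (by simp [hj])
  rcases Nat.eq_zero_or_pos (i : ℕ) with hzero | hpos
  · -- c i • ω i = 0 with all other coefficients zero
    have : ∑ j, c j • ω j = c i • ω i := by
      refine Finset.sum_eq_single i (fun j _ hji => ?_) (by simp)
      by_contra hcj
      have : c j ≠ 0 := fun h => hcj (by rw [h, zero_smul])
      have hle := hmax j this
      have : j = i := Fin.ext (by omega)
      exact hji this
    rw [this] at hc
    rcases smul_eq_zero.mp hc with h | h
    · exact hci h
    · exact h0 i hzero h
  · -- apply ψ at index i-1
    have hipred : (i : ℕ) - 1 < N := by omega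
    set ip : Fin N := ⟨(i : ℕ) - 1, hipred⟩ with hip
    have happ := congrArg (ψ ip) hc
    rw [map_sum, map_zero] at happ
    have hsum : ∑ j, c j • (ψ ip) (ω j) = c i • (ψ ip) (ω i) := by
      refine Finset.sum_eq_single i (fun j _ hji => ?_) (by simp)
      rcases eq_or_ne (c j) 0 with h | h
      · rw [h, zero_smul]
      · have hle := hmax j h
        have hlt : (j : ℕ) < (i : ℕ) := lt_of_le_of_ne hle (fun hh => hji (Fin.ext hh))
        rw [hz ip j (by simp [hip]; omega), smul_zero]
    simp_rw [map_smul] at happ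
    rw [hsum] at happ
    rcases smul_eq_zero.mp happ with h | h
    · exact hci h
    · exact hs ip i (by simp [hip]; omega) h

/-- Choose an independent spanning family for the column space of a rank-`r` matrix. -/
lemma exists_basis_family {r : ℕ} (A : Matrix (Fin n) (Fin n) ℝ) (h : A.rank = r) :
    ∃ v : Fin r → (Fin n → ℝ), LinearIndependent ℝ v ∧
      span ℝ (Set.range v) = LinearMap.range A.mulVecLin := by
  set p := LinearMap.range A.mulVecLin with hpdef
  have hfr : finrank ℝ p = r := h
  set b : Basis (Fin r) ℝ p := (Module.finBasis ℝ p).reindex (finCongr hfr) with hb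
  refine ⟨fun i => (b i : Fin n → ℝ), ?_, ?_⟩
  · exact b.linearIndependent.map' p.subtype (Submodule.ker_subtype p)
  · have : Set.range (fun i => (b i : Fin n → ℝ)) = p.subtype '' Set.range b := by
      rw [← Set.range_comp]; rfl
    rw [this, ← Submodule.map_span, b.span_eq, Submodule.map_subtype_top]

/-- Independence of the image family detects full rank of the product. -/
lemma indep_image_iff {r : ℕ} (A B : Matrix (Fin n) (Fin n) ℝ) (v : Fin r → (Fin n → ℝ))
    (hspan : span ℝ (Set.range v) = LinearMap.range B.mulVecLin) :
    LinearIndependent ℝ (A.mulVecLin ∘ v) ↔ (A * B).rank = r := by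
  have hsp : span ℝ (Set.range (A.mulVecLin ∘ v)) =
      LinearMap.range ((A * B).mulVecLin) := by
    rw [Set.range_comp, Submodule.span_image, hspan, Matrix.mulVecLin_mul,
      LinearMap.range_comp]
  rw [linearIndependent_iff_card_eq_finrank_span]
  unfold Set.finrank
  rw [hsp]
  simp only [Fintype.card_fin]
  constructor
  · intro hh; exact hh.symm
  · intro hh; exact hh.symm

/-- The triangular case: matrices whose pairwise products drop rank backwards. -/
lemma length_le_of_triangular {N r : ℕ} (a : ℕ → Matrix (Fin n) (Fin n) ℝ)
    (hrk : ∀ i < N, (a i).rank = r)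
    (hlow : ∀ i j, j ≤ i → i < N → (a i * a j).rank ≠ r)
    (hsup : ∀ i, i + 1 < N → (a i * a (i + 1)).rank = r) :
    N ≤ 2 ^ n := by
  classical
  -- choose basis families
  have hch : ∀ i : Fin N, ∃ v : Fin r → (Fin n → ℝ), LinearIndependent ℝ v ∧
      span ℝ (Set.range v) = LinearMap.range (a i).mulVecLin :=
    fun i => exists_basis_family _ (hrk i i.isLt)
  choose v hvind hvspan using hch
  set ω : Fin N → ExteriorAlgebra ℝ (Fin n → ℝ) :=
    fun i => ExteriorAlgebra.ιMulti ℝ r (v i) with hω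
  set ψ : Fin N → (ExteriorAlgebra ℝ (Fin n → ℝ) →ₗ[ℝ] ExteriorAlgebra ℝ (Fin n → ℝ)) :=
    fun i => (ExteriorAlgebra.map (a i).mulVecLin).toLinearMap with hψ
  have hψω : ∀ i j : Fin N, ψ i (ω j) =
      ExteriorAlgebra.ιMulti ℝ r ((a i).mulVecLin ∘ v j) := by
    intro i j
    simp [hψ, hω, ExteriorAlgebra.map_apply_ιMulti]
  have hind : LinearIndependent ℝ ω := by
    apply indep_of_triangular ω ψ
    · intro i _
      exact iotaMulti_ne_zero _ (hvind i)
    · intro i j hji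
      rw [hψω]
      apply iotaMulti_eq_zero
      intro hcon
      exact hlow i j hji i.isLt ((indep_image_iff _ _ _ (hvspan j)).mp hcon)
    · intro i j hij
      rw [hψω]
      apply iotaMulti_ne_zero
      rw [indep_image_iff _ _ _ (hvspan j)]
      have hj' : (j : ℕ) = (i : ℕ) + 1 := hij
      have h1 : (i : ℕ) + 1 < N := by omega
      rw [hj']
      exact hsup i h1
  exact card_le_of_indep ω (fun i => subset_span (Set.mem_range_self _)) hind

/-- Products along a chain with full-rank adjacent products keep full rank. -/
lemma prod_rank_of_chain {n r : ℕ} : ∀ (m : ℕ) (b : ℕ → Matrix (Fin n) (Fin n) ℝ),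
    (∀ k ≤ m, (b k).rank = r) → (∀ k < m, (b k * b (k + 1)).rank = r) →
    ((List.ofFn fun t : Fin (m + 1) => b t).prod).rank = r ∧
      LinearMap.range ((List.ofFn fun t : Fin (m + 1) => b t).prod).mulVecLin
        = LinearMap.range (b 0).mulVecLin := by
  intro m
  induction m with
  | zero =>
    intro b h1 _
    constructor
    · simpa using h1 0 (le_refl 0)
    · simp
  | succ m ih =>
    intro b h1 h2
    have hofn : (List.ofFn fun t : Fin (m + 2) => b t) =
        b 0 :: (List.ofFn fun t : Fin (m + 1) => b (t + 1)) := by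
      rw [List.ofFn_succ]
      rfl
    obtain ⟨ihr, ihrange⟩ := ih (fun k => b (k + 1))
      (fun k hk => h1 (k + 1) (by omega)) (fun k hk => h2 (k + 1) (by omega))
    set P := (List.ofFn fun t : Fin (m + 1) => b (t + 1)).prod with hP
    have hprod : (List.ofFn fun t : Fin (m + 2) => b t).prod = b 0 * P := by
      rw [hofn, List.prod_cons]
    have hrange : LinearMap.range ((b 0 * P).mulVecLin)
        = LinearMap.range ((b 0 * b 1).mulVecLin) := by
      rw [Matrix.mulVecLin_mul, Matrix.mulVecLin_mul, LinearMap.range_comp,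
        LinearMap.range_comp, ihrange]
    have hrank : (b 0 * P).rank = r := by
      show finrank ℝ (LinearMap.range ((b 0 * P).mulVecLin)) = r
      rw [hrange]
      exact h2 0 (by omega)
    have hr0 : (b 0).rank = r := h1 0 (by omega)
    have hrangeeq : LinearMap.range ((b 0 * P).mulVecLin)
        = LinearMap.range (b 0).mulVecLin := by
      apply Submodule.eq_of_le_of_finrank_eq
      · rw [Matrix.mulVecLin_mul]
        exact LinearMap.range_comp_le_range _ _
      · show (b 0 * P).rank = (b 0).rank
        rw [hrank, hr0]
    rw [hprod]
    exact ⟨hrank, hrangeeq⟩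

theorem rank_drop_of_long_products
    (n r : ℕ) (S : Set (Matrix (Fin n) (Fin n) ℝ))
    (hrank : ∀ M ∈ S, M.rank = r)
    (hlong : ∃ L : ℕ, ∀ l : List (Matrix (Fin n) (Fin n) ℝ),
      (∀ M ∈ l, M ∈ S) → L ≤ l.length → l.prod.rank ≤ r - 1) :
    ∀ l : List (Matrix (Fin n) (Fin n) ℝ),
      (∀ M ∈ l, M ∈ S) → l.length = 2 ^ (n + 1) → l.prod.rank ≤ r - 1 := by
  classical
  intro l hl hlen
  by_contra hcon
  set N := 2 ^ (n + 1) with hN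
  have hNpos : 0 < N := Nat.pow_pos (by norm_num)
  have hlenpos : 0 < l.length := by rw [hlen]; exact hNpos
  set a : ℕ → Matrix (Fin n) (Fin n) ℝ := fun i => l.getD i 1 with ha
  have hget : ∀ i (hi : i < N), a i = l[i]'(by omega) := by
    intro i hi
    have hi' : i < l.length := by omega
    simp [ha, List.getD_eq_getElem?_getD, List.getElem?_eq_getElem hi']
  have hmemS : ∀ i, i < N → a i ∈ S := by
    intro i hi
    rw [hget i hi]
    exact hl _ (List.getElem_mem _)
  have hrk : ∀ i, i < N → (a i).rank = r := fun i hi => hrank _ (hmemS i hi)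
  -- the product has rank at most r
  obtain ⟨x, t, hxt⟩ := List.exists_cons_of_ne_nil (List.ne_nil_of_length_pos hlenpos)
  have h00 : l.prod.rank ≤ r := by
    rw [hxt, List.prod_cons]
    refine le_trans (Matrix.rank_mul_le_left _ _) ?_
    rw [hrank x (hl x (by rw [hxt]; exact List.mem_cons_self))]
  have hrpos : 0 < r := by omega
  have hprodr : l.prod.rank = r := by omega
  -- adjacent products have full rank
  have hadj : ∀ i, i + 1 < N → (a i * a (i + 1)).rank = r := by
    intro i hi
    have hi1 : i < l.length := by rw [hlen]; omega
    have hi2 : i + 1 < l.length := by rw [hlen]; omega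
    have hfact : l = l.take i ++ (a i :: a (i + 1) :: l.drop (i + 2)) := by
      conv_lhs => rw [← List.take_append_drop i l]
      congr 1
      rw [List.drop_eq_getElem_cons hi1, List.drop_eq_getElem_cons hi2,
        hget i (by omega), hget (i + 1) (by omega)]
    have hpe : l.prod = (l.take i).prod * ((a i * a (i + 1)) * (l.drop (i + 2)).prod) := by
      conv_lhs => rw [hfact]
      rw [List.prod_append, List.prod_cons, List.prod_cons, mul_assoc]
    have hle1 : l.prod.rank ≤ (a i * a (i + 1)).rank := by
      rw [hpe]
      exact le_trans (Matrix.rank_mul_le_right _ _) (Matrix.rank_mul_le_left _ _)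
    have hle2 : (a i * a (i + 1)).rank ≤ r := by
      refine le_trans (Matrix.rank_mul_le_left _ _) ?_
      rw [hrk i (by omega)]
    omega
  by_cases hcyc : ∃ i j, j ≤ i ∧ i < N ∧ (a i * a j).rank = r
  · -- a cycle: we can produce arbitrarily long full-rank products
    obtain ⟨i, j, hji, hiN, hcr⟩ := hcyc
    obtain ⟨L, hL⟩ := hlong
    set p := i + 1 - j with hp
    have hppos : 0 < p := by omega
    set b : ℕ → Matrix (Fin n) (Fin n) ℝ := fun k => a (j + k % p) with hb
    have hidx : ∀ k, j + k % p < N := by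
      intro k
      have := Nat.mod_lt k hppos
      omega
    have hb_rank : ∀ k, (b k).rank = r := fun k => hrk _ (hidx k)
    have hb_adj : ∀ k, (b k * b (k + 1)).rank = r := by
      intro k
      have hkp : k % p < p := Nat.mod_lt _ hppos
      rcases eq_or_ne (k % p) (p - 1) with he | hne
      · -- wrap-around : (a i) * (a j)
        have h1 : (k + 1) % p = 0 := by
          obtain ⟨q, hq⟩ : ∃ q, p * q + k % p = k := ⟨k / p, Nat.div_add_mod k p⟩
          have hk1 : k + 1 = p * (q + 1) := by
            conv_lhs => rw [← hq, he]
            rw [Nat.add_assoc, Nat.sub_add_cancel hppos, Nat.mul_succ]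
          rw [hk1, Nat.mul_mod_right]
        have hidx1 : j + (p - 1) = i := by omega
        have hbk : b k = a i := by
          show a (j + k % p) = a i
          rw [he, hidx1]
        have hbk1 : b (k + 1) = a j := by
          show a (j + (k + 1) % p) = a j
          rw [h1, Nat.add_zero]
        rw [hbk, hbk1]
        exact hcr
      · have hp2 : 1 < p := by omega
        have h1 : (k + 1) % p = k % p + 1 := by
          rw [Nat.add_mod, Nat.mod_eq_of_lt hp2, Nat.mod_eq_of_lt (by omega : k % p + 1 < p)]
        have hbk1 : b (k + 1) = a (j + k % p + 1) := by
          show a (j + (k + 1) % p) = a (j + k % p + 1)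
          rw [h1, Nat.add_assoc]
        rw [hbk1]
        exact hadj (j + k % p) (by omega)
    have hchain := prod_rank_of_chain L b (fun k _ => hb_rank k) (fun k _ => hb_adj k)
    have hlist := hL (List.ofFn fun t : Fin (L + 1) => b t) ?_ ?_
    · rw [hchain.1] at hlist
      omega
    · intro M hM
      rw [List.mem_ofFn] at hM
      obtain ⟨t, rfl⟩ := hM
      exact hmemS _ (hidx t)
    · rw [List.length_ofFn]
      omega
  · -- no cycle: triangular system, bounded length
    push_neg at hcyc
    have hbound := length_le_of_triangular a hrk
      (fun i j hji hiN => hcyc i j hji hiN) hadj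
    have h2n : (2:ℕ) ^ n < 2 ^ (n + 1) := by
      rw [pow_succ]
      omega
    omega
end

section
/- Let (λ, φ, γ) be a linear representation over alphabet A of a function π : A* → ℝ (i.e., π(w) = λ φ(w) γ for a monoid morphism φ into n×n real matrices), and assume every φ(a), a ∈ A, has rank at most 1. Then for all a, b ∈ A and every word w ∈ A*: π(ab)·π(bw) = π(abw)·π(b). -/
open Matrix

lemma mul_vecMulVec' {n : ℕ} (c r : Fin n → ℝ) (X : Matrix (Fin n) (Fin n) ℝ) :
    X * vecMulVec c r = vecMulVec (X *ᵥ c) r := by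
  ext i j
  simp [Matrix.mul_apply, vecMulVec_apply, Matrix.mulVec, dotProduct,
    Finset.sum_mul, mul_assoc]

lemma vecMulVec_mul' {n : ℕ} (c r : Fin n → ℝ) (Y : Matrix (Fin n) (Fin n) ℝ) :
    vecMulVec c r * Y = vecMulVec c (r ᵥ* Y) := by
  ext i j
  simp [Matrix.mul_apply, vecMulVec_apply, Matrix.vecMul, dotProduct,
    Finset.mul_sum, mul_assoc]

lemma vecMul_vecMulVec' {n : ℕ} (u c r : Fin n → ℝ) :
    u ᵥ* vecMulVec c r = (u ⬝ᵥ c) • r := by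
  ext j
  simp [Matrix.vecMul, vecMulVec_apply, dotProduct, Finset.sum_mul, mul_assoc]

lemma sandwich {n : ℕ} (u v c r : Fin n → ℝ) (X Y : Matrix (Fin n) (Fin n) ℝ) :
    u ᵥ* (X * vecMulVec c r * Y) ⬝ᵥ v = (u ᵥ* X ⬝ᵥ c) * (r ᵥ* Y ⬝ᵥ v) := by
  rw [mul_vecMulVec', vecMulVec_mul', vecMul_vecMulVec', smul_dotProduct,
    smul_eq_mul, Matrix.dotProduct_mulVec]

lemma rank_le_one_factor {n : ℕ} (M : Matrix (Fin n) (Fin n) ℝ) (h : M.rank ≤ 1) :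
    ∃ c r : Fin n → ℝ, M = vecMulVec c r := by
  rw [Matrix.rank] at h
  obtain ⟨c, hc⟩ := (Submodule.finrank_le_one_iff_isPrincipal _).mp h
  have hcol : ∀ j, ∃ t : ℝ, t • c = M.mulVec (Pi.single j 1) := by
    intro j
    have : M.mulVec (Pi.single j 1) ∈ LinearMap.range M.mulVecLin :=
      ⟨Pi.single j 1, rfl⟩
    rw [hc] at this
    exact Submodule.mem_span_singleton.mp this
  choose r hr using hcol
  refine ⟨c, r, ?_⟩
  ext i j
  have := congrFun (hr j) i
  simpa [Matrix.mulVec, dotProduct, Pi.single_apply, mul_comm,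
    vecMulVec_apply] using this.symm

theorem markov_identity_of_rank_le_one
    (A : Type*) (n : ℕ)
    (l : Fin n → ℝ) (γ : Fin n → ℝ) (φ : A → Matrix (Fin n) (Fin n) ℝ)
    (π : List A → ℝ)
    (hπ : ∀ w : List A, π w = l ᵥ* (w.map φ).prod ⬝ᵥ γ)
    (hrank : ∀ a : A, (φ a).rank ≤ 1) :
    ∀ (a b : A) (w : List A),
      π [a, b] * π (b :: w) = π (a :: b :: w) * π [b] := by
  intro a b w
  obtain ⟨c, r, hb⟩ := rank_le_one_factor (φ b) (hrank b)
  have e1 : (List.map φ [a, b]).prod = φ a * vecMulVec c r * 1 := by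
    simp [hb, Matrix.mul_assoc]
  have e2 : (List.map φ (b :: w)).prod = 1 * vecMulVec c r * (w.map φ).prod := by
    simp [hb]
  have e3 : (List.map φ (a :: b :: w)).prod = φ a * vecMulVec c r * (w.map φ).prod := by
    simp [hb, Matrix.mul_assoc]
  have e4 : (List.map φ [b]).prod = 1 * vecMulVec c r * 1 := by
    simp [hb]
  rw [hπ [a, b], hπ (b :: w), hπ (a :: b :: w), hπ [b], e1, e2, e3, e4,
    sandwich, sandwich, sandwich, sandwich]
  ring
end

section
/- Let S be a set of n×n real matrices, and suppose there exists an integer L such that every product of L elements of S has rank at most 1. Then every product of 2^((n+1)(n-1)) = 2^(n²-1) elements of S has rank at most 1. -/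
open Matrix LinearMap Function Module

namespace RankOneProd


variable {n : ℕ}

abbrev Mat (n : ℕ) := Matrix (Fin n) (Fin n) ℝ

/-- rank of a contiguous sub-product bounds the rank of the whole product -/
lemma rank_prod_le_middle (p s q : List (Mat n)) :
    ((p ++ s ++ q).prod).rank ≤ (s.prod).rank := by
  rw [List.prod_append, List.prod_append]
  exact le_trans (Matrix.rank_mul_le_left _ _) (Matrix.rank_mul_le_right _ _)

/-- chain lemma: if all elements have rank r and consecutive products have rank r,
then the whole product has rank r (and the same column space as the head). -/
lemma chain_prod_rank (r : ℕ) :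
    ∀ (lc : List (Mat n)) (X : Mat n), X.rank = r → (∀ Y ∈ lc, Matrix.rank Y = r) →
    List.Chain (fun A B => (A * B).rank = r) X lc →
    ((X :: lc).prod).rank = r ∧
      LinearMap.range (X :: lc).prod.mulVecLin = LinearMap.range X.mulVecLin
  | [], X, hX, _, _ => by simp [hX]
  | Y :: lc, X, hX, hmem, hchain => by
    obtain ⟨hXY, hchain'⟩ := List.chain_cons.mp hchain
    obtain ⟨ih1, ih2⟩ := chain_prod_rank r lc Y (hmem Y (by simp))
      (fun Z hZ => hmem Z (by simp [hZ])) hchain'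
    have hprod : (X :: Y :: lc).prod = X * (Y :: lc).prod := by
      simp [List.prod_cons]
    have hrange : LinearMap.range (X * (Y :: lc).prod).mulVecLin
        = LinearMap.range (X * Y).mulVecLin := by
      rw [Matrix.mulVecLin_mul, Matrix.mulVecLin_mul, LinearMap.range_comp,
        LinearMap.range_comp, ih2]
    have hrank : (X * (Y :: lc).prod).rank = r := by
      rw [Matrix.rank, hrange, ← Matrix.rank]
      exact hXY
    refine ⟨by rw [hprod]; exact hrank, ?_⟩
    rw [hprod, hrange]
    apply Submodule.eq_of_le_of_finrank_eq
    · rw [Matrix.mulVecLin_mul, LinearMap.range_comp]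
      exact LinearMap.map_le_range
    · show Matrix.rank _ = Matrix.rank _
      rw [hXY, hX]

lemma chain'_prod_rank (r : ℕ) (l : List (Mat n)) (h0 : l ≠ [])
    (h1 : ∀ X ∈ l, X.rank = r)
    (h2 : List.Chain' (fun A B => (A * B).rank = r) l) : l.prod.rank = r := by
  cases l with
  | nil => exact absurd rfl h0
  | cons X lc =>
      exact (chain_prod_rank r lc X (h1 X (by simp))
        (fun Y hY => h1 Y (by simp [hY])) h2).1








lemma long_prods (S : Set (Mat n)) (L : ℕ)
    (h : ∀ l : List (Mat n), (∀ M ∈ l, M ∈ S) → l.length = L → l.prod.rank ≤ 1) :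
    ∀ l : List (Mat n), (∀ M ∈ l, M ∈ S) → L ≤ l.length → l.prod.rank ≤ 1 := by
  intro l hm hL
  have hsplit : l = l.take L ++ l.drop L := (List.take_append_drop L l).symm
  calc l.prod.rank = ((l.take L) ++ (l.drop L)).prod.rank := by rw [← hsplit]
    _ ≤ (l.take L).prod.rank := by
        rw [List.prod_append]; exact Matrix.rank_mul_le_left _ _
    _ ≤ 1 := h _ (fun M hM => hm M (List.mem_of_mem_take hM))
        (by rw [List.length_take]; omega)

lemma concat_blocks (S : Set (Mat n)) (m : ℕ) : ∀ (c : List (Mat n)),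
    (∀ X ∈ c, ∃ w : List (Mat n), (∀ M ∈ w, M ∈ S) ∧ w.length = m ∧ w.prod = X) →
    ∃ w : List (Mat n), (∀ M ∈ w, M ∈ S) ∧ w.length = m * c.length ∧ w.prod = c.prod
  | [], _ => ⟨[], by simp⟩
  | X :: c, h => by
    obtain ⟨w1, hw1, hl1, hp1⟩ := h X (by simp)
    obtain ⟨w2, hw2, hl2, hp2⟩ := concat_blocks S m c (fun Y hY => h Y (by simp [hY]))
    refine ⟨w1 ++ w2, ?_, ?_, ?_⟩
    · intro M hM
      rcases List.mem_append.mp hM with h' | h'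
      · exact hw1 M h'
      · exact hw2 M h'
    · rw [List.length_append, hl1, hl2, List.length_cons]; ring
    · rw [List.prod_append, hp1, hp2, List.prod_cons]

lemma chunk (m : ℕ) : ∀ (N : ℕ) (l : List (Mat n)), l.length = m * N →
    ∃ f : ℕ → List (Mat n), (∀ i, i < N → (f i).length = m) ∧
      l = ((List.range N).map f).flatten := by
  intro N
  induction N with
  | zero =>
      intro l hl
      refine ⟨fun _ => [], by omega, ?_⟩
      simp only [List.range_zero, List.map_nil, List.flatten_nil]
      exact List.length_eq_zero_iff.mp (by omega)
  | succ N ih =>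
      intro l hl
      have hlen : (l.drop m).length = m * N := by
        rw [List.length_drop, hl]; ring_nf; omega
      obtain ⟨f', hf'len, hf'⟩ := ih (l.drop m) hlen
      refine ⟨fun i => if i = 0 then l.take m else f' (i - 1), ?_, ?_⟩
      · intro i hi
        by_cases h0 : i = 0
        · show (if i = 0 then l.take m else f' (i-1)).length = m
          rw [if_pos h0, List.length_take, hl]
          exact min_eq_left (by nlinarith)
        · show (if i = 0 then l.take m else f' (i-1)).length = m
          rw [if_neg h0]
          exact hf'len (i - 1) (by omega)
      · have hmap : (List.range (N+1)).map (fun i => if i = 0 then l.take m else f' (i - 1))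
            = l.take m :: (List.range N).map f' := by
          rw [List.range_succ_eq_map, List.map_cons, List.map_map]
          refine congrArg₂ _ (if_pos rfl) ?_
          apply List.map_congr_left
          intro t _
          show (if Nat.succ t = 0 then l.take m else f' (Nat.succ t - 1)) = f' t
          rw [if_neg (Nat.succ_ne_zero t)]
          simp
        rw [hmap, List.flatten_cons, ← hf', List.take_append_drop]

/-- ordered product of `B a, B (a+1), ..., B (b-1)` -/
def Pl (B : ℕ → Mat n) (a b : ℕ) : List (Mat n) :=
  (List.range (b - a)).map fun t => B (a + t)

lemma Pl_split (B : ℕ → Mat n) {a b c : ℕ} (hab : a ≤ b) (hbc : b ≤ c) :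
    Pl B a c = Pl B a b ++ Pl B b c := by
  unfold Pl
  have h1 : c - a = (b - a) + (c - b) := by omega
  rw [h1, List.range_add, List.map_append, List.map_map]
  refine congrArg₂ (· ++ ·) rfl ?_
  apply List.map_congr_left
  intro t _
  simp only [Function.comp_apply]
  have : a + (b - a + t) = b + t := by omega
  rw [this]

lemma Pl_single (B : ℕ → Mat n) (t : ℕ) : Pl B t (t + 1) = [B t] := by
  unfold Pl
  simp [List.range_succ]

lemma Pl_pair_prod (B : ℕ → Mat n) (t : ℕ) : (Pl B t (t + 2)).prod = B t * B (t + 1) := by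
  have : Pl B t (t+2) = Pl B t (t+1) ++ Pl B (t+1) (t+2) := Pl_split B (by omega) (by omega)
  rw [this, Pl_single, Pl_single, List.prod_append]
  simp

lemma Pl_rank_le (B : ℕ → Mat n) {a b c d : ℕ} (hab : a ≤ b) (hbc : b ≤ c) (hcd : c ≤ d) :
    ((Pl B a d).prod).rank ≤ ((Pl B b c).prod).rank := by
  have : Pl B a d = Pl B a b ++ Pl B b c ++ Pl B c d := by
    rw [List.append_assoc, ← Pl_split B hbc hcd, ← Pl_split B hab (le_trans hbc hcd)]
  rw [this]
  exact rank_prod_le_middle _ _ _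



lemma rank_mul_inj {n r k : ℕ} (E : Matrix (Fin n) (Fin r) ℝ) (X : Matrix (Fin r) (Fin k) ℝ)
    (h : Function.Injective E.mulVecLin) : (E * X).rank = X.rank := by
  rw [Matrix.rank, Matrix.rank, Matrix.mulVecLin_mul, LinearMap.range_comp]
  exact (LinearEquiv.finrank_eq (Submodule.equivMapOfInjective _ h _)).symm

lemma rank_mul_surj {n r k : ℕ} (X : Matrix (Fin k) (Fin r) ℝ) (F : Matrix (Fin r) (Fin n) ℝ)
    (h : Function.Surjective F.mulVecLin) : (X * F).rank = X.rank := by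
  rw [Matrix.rank, Matrix.rank, Matrix.mulVecLin_mul, LinearMap.range_comp,
    LinearMap.range_eq_top.mpr h, Submodule.map_top]

lemma det_ne_zero_iff_rank {r : ℕ} (G : Matrix (Fin r) (Fin r) ℝ) :
    G.det ≠ 0 ↔ G.rank = r := by
  constructor
  · intro h
    have := Matrix.rank_of_isUnit G ((Matrix.isUnit_iff_isUnit_det G).mpr (isUnit_iff_ne_zero.mpr h))
    simpa using this
  · intro h
    have htop : LinearMap.range G.mulVecLin = ⊤ := by
      apply Submodule.eq_top_of_finrank_eq
      rw [← Matrix.rank]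
      rw [h, finrank_fintype_fun_eq_card, Fintype.card_fin]
    have hsurj : Function.Surjective G.mulVecLin := LinearMap.range_eq_top.mp htop
    have hinj : Function.Injective G.mulVecLin :=
      (LinearMap.injective_iff_surjective).mpr hsurj
    have : IsUnit G := Matrix.mulVec_injective_iff_isUnit.mp hinj
    intro h0
    exact ((Matrix.isUnit_iff_isUnit_det G).mp this).ne_zero h0

lemma rank_factorization {n r : ℕ} (B : Matrix (Fin n) (Fin n) ℝ) (h : B.rank = r) :
    ∃ (E : Matrix (Fin n) (Fin r) ℝ) (F : Matrix (Fin r) (Fin n) ℝ),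
      B = E * F ∧ Function.Injective E.mulVecLin ∧ Function.Surjective F.mulVecLin := by
  classical
  have hfin : finrank ℝ (LinearMap.range B.mulVecLin) = r := h
  set V := LinearMap.range B.mulVecLin with hV
  let b : Basis (Fin r) ℝ V := finBasisOfFinrankEq ℝ V hfin
  let E : Matrix (Fin n) (Fin r) ℝ := Matrix.of fun x j => (b j : Fin n → ℝ) x
  let g : (Fin n → ℝ) →ₗ[ℝ] V := B.mulVecLin.rangeRestrict
  let F : Matrix (Fin r) (Fin n) ℝ := Matrix.of fun j y => b.repr (g (Pi.single y 1)) j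
  have hE : E.mulVecLin = V.subtype ∘ₗ (b.equivFun.symm : (Fin r → ℝ) →ₗ[ℝ] V) := by
    apply LinearMap.ext
    intro c
    funext x
    simp only [Matrix.mulVecLin_apply, LinearMap.coe_comp, Function.comp_apply,
      Submodule.coe_subtype, LinearEquiv.coe_coe]
    rw [Basis.equivFun_symm_apply]
    rw [Matrix.mulVec, dotProduct]
    have hc : ((∑ i, c i • b i : V) : Fin n → ℝ) x = ∑ i, c i * (b i : Fin n → ℝ) x := by
      push_cast
      simp [Finset.sum_apply]
    rw [hc]
    apply Finset.sum_congr rfl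
    intro j _
    simp [E, mul_comm]
  have hEinj : Function.Injective E.mulVecLin := by
    rw [hE]
    exact V.injective_subtype.comp b.equivFun.symm.injective
  have hF : F.mulVecLin = (b.equivFun : V ≃ₗ[ℝ] (Fin r → ℝ)).toLinearMap ∘ₗ g := by
    apply LinearMap.ext
    intro c
    funext j
    simp only [Matrix.mulVecLin_apply, LinearMap.coe_comp, Function.comp_apply,
      LinearEquiv.coe_coe, Basis.equivFun_apply]
    rw [Matrix.mulVec, dotProduct]
    have hcdec : c = ∑ y, c y • (Pi.single y 1 : Fin n → ℝ) := by
      funext z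
      simp [Finset.sum_apply, Pi.single_apply]
    conv_rhs => rw [hcdec]
    rw [map_sum, map_sum]
    rw [Finsupp.finset_sum_apply]
    apply Finset.sum_congr rfl
    intro y _
    simp [F, mul_comm]
  have hFsurj : Function.Surjective F.mulVecLin := by
    rw [hF]
    exact b.equivFun.surjective.comp (LinearMap.surjective_rangeRestrict _)
  refine ⟨E, F, ?_, hEinj, hFsurj⟩
  ext x y
  have h1 : (E * F) x y = ∑ j, (b.repr (g (Pi.single y 1)) j) * ((b j : Fin n → ℝ) x) := by
    rw [Matrix.mul_apply]
    apply Finset.sum_congr rfl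
    intro j _
    simp [E, F, mul_comm]
  have h2 : ∑ j, (b.repr (g (Pi.single y 1)) j) * ((b j : Fin n → ℝ) x)
      = ((g (Pi.single y 1) : V) : Fin n → ℝ) x := by
    conv_rhs => rw [← Basis.sum_repr b (g (Pi.single y 1))]
    push_cast
    simp [Finset.sum_apply]
  have h3 : ((g (Pi.single y 1) : V) : Fin n → ℝ) x = B x y := by
    show (B.mulVecLin (Pi.single y 1)) x = B x y
    rw [Matrix.mulVecLin_apply, Matrix.mulVec_single]
    exact mul_one _
  rw [h1, h2, h3]





noncomputable def psi (n r : ℕ) (F : Matrix (Fin r) (Fin n) ℝ) :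
    (Fin n → ℝ) [⋀^Fin r]→ₗ[ℝ] ℝ :=
  (Matrix.detRowAlternating).compLinearMap F.mulVecLin

lemma psi_apply (r : ℕ) (F : Matrix (Fin r) (Fin n) ℝ) (E : Matrix (Fin n) (Fin r) ℝ) :
    psi n r F (fun a => Eᵀ a) = (F * E).det := by
  show Matrix.detRowAlternating (Matrix.of fun a => F.mulVecLin (Eᵀ a)) = _
  show Matrix.det _ = _
  have : (Matrix.of fun a => F.mulVecLin (Eᵀ a)) = (F * E)ᵀ := by
    ext a b
    simp [Matrix.mulVecLin_apply, Matrix.mulVec, dotProduct, Matrix.mul_apply,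
      Matrix.transpose_apply]
  rw [this, Matrix.det_transpose]

/-- evaluation of an alternating map at a fixed tuple, as a linear map -/
noncomputable def evalAt (r : ℕ) (w : Fin r → (Fin n → ℝ)) :
    ((Fin n → ℝ) [⋀^Fin r]→ₗ[ℝ] ℝ) →ₗ[ℝ] ℝ where
  toFun ψ := ψ w
  map_add' _ _ := rfl
  map_smul' _ _ := rfl

noncomputable def theta (n r : ℕ) :
    ((Fin n → ℝ) [⋀^Fin r]→ₗ[ℝ] ℝ) →ₗ[ℝ] ({s : Finset (Fin n) // s.card = r} → ℝ) where
  toFun ψ := fun s => ψ (fun a => (Pi.single (s.1.orderEmbOfFin s.2 a) 1 : Fin n → ℝ))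
  map_add' _ _ := rfl
  map_smul' _ _ := rfl

lemma theta_inj (r : ℕ) : Function.Injective (theta n r) := by
  rw [← LinearMap.ker_eq_bot]
  rw [LinearMap.ker_eq_bot']
  intro ψ hψ
  apply Basis.ext_alternating (Pi.basisFun ℝ (Fin n)) (f := ψ) (g := 0)
  intro v hv
  classical
  set s : Finset (Fin n) := Finset.univ.image v with hs
  have hcard : s.card = r := by
    rw [hs, Finset.card_image_of_injective _ hv, Finset.card_univ, Fintype.card_fin]
  set m : Fin r ↪o Fin n := s.orderEmbOfFin hcard with hm
  have hbij1 : Function.Bijective (fun a : Fin r => (⟨v a, by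
      simp [hs]⟩ : {x // x ∈ s})) := by
    rw [Fintype.bijective_iff_injective_and_card]
    constructor
    · intro a a' h
      exact hv (congrArg Subtype.val h)
    · simp [Fintype.card_coe, hcard]
  have hbij2 : Function.Bijective (fun a : Fin r => (⟨m a, Finset.orderEmbOfFin_mem s hcard a⟩
      : {x // x ∈ s})) := by
    rw [Fintype.bijective_iff_injective_and_card]
    constructor
    · intro a a' h
      exact m.injective (congrArg Subtype.val h)
    · simp [Fintype.card_coe, hcard]
  let α := Equiv.ofBijective _ hbij1
  let β := Equiv.ofBijective _ hbij2
  let σ : Equiv.Perm (Fin r) := α.trans β.symm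
  have hσ : ∀ a, m (σ a) = v a := by
    intro a
    have : (⟨m (σ a), _⟩ : {x // x ∈ s}) = β (σ a) := rfl
    have h2 : β (σ a) = α a := by
      show β (β.symm (α a)) = α a
      exact β.apply_symm_apply _
    have := congrArg Subtype.val h2
    exact this
  have hψ0 : ψ (fun a => (Pi.single (m a) 1 : Fin n → ℝ)) = 0 := by
    have := congrFun hψ ⟨s, hcard⟩
    exact this
  have key : ψ (fun a => (Pi.single (v a) 1 : Fin n → ℝ)) = 0 := by
    have hperm := AlternatingMap.map_perm ψ (fun a => (Pi.single (m a) 1 : Fin n → ℝ)) σ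
    have hfun : ((fun a => (Pi.single (m a) 1 : Fin n → ℝ)) ∘ σ) = fun a => (Pi.single (v a) 1 : Fin n → ℝ) := by
      funext a
      simp only [Function.comp_apply]
      rw [hσ a]
    rw [hfun] at hperm
    rw [hperm, hψ0]
    simp
  simp only [AlternatingMap.zero_apply]
  rw [← key]
  congr 1
  funext a
  rw [Pi.basisFun_apply]

lemma card_bound {N r : ℕ} (E : ℕ → Matrix (Fin n) (Fin r) ℝ)
    (F : ℕ → Matrix (Fin r) (Fin n) ℝ)
    (hcons : ∀ i, i + 1 < N → (F i * E (i+1)).det ≠ 0)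
    (hzero : ∀ a b, b ≤ a → a < N → b < N → (F a * E b).det = 0) :
    N ≤ 2 ^ n + 1 := by
  rcases Nat.eq_zero_or_pos N with h0 | hpos
  · subst h0; exact Nat.zero_le _
  obtain ⟨K, rfl⟩ : ∃ K, N = K + 1 := ⟨N - 1, by omega⟩
  suffices h : K ≤ 2 ^ n by omega
  have hli : LinearIndependent ℝ (fun i : Fin K => psi n r (F i)) := by
    rw [Fintype.linearIndependent_iff]
    intro c hc
    have key : ∀ i : Fin K, (∀ j : Fin K, j < i → c j = 0) → c i = 0 := by
      intro i hj
      have hev := congrArg (evalAt r (fun a => (E (i.1+1))ᵀ a)) hc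
      rw [map_sum, map_zero] at hev
      have hterm : ∀ j : Fin K, (evalAt r (fun a => (E (i.1+1))ᵀ a)) (c j • psi n r (F j))
          = c j * (F j * E (i.1+1)).det := by
        intro j
        rw [LinearMap.map_smul]
        rw [show (evalAt r (fun a => (E (i.1+1))ᵀ a)) (psi n r (F j))
          = (F j * E (i.1+1)).det from psi_apply r (F j) (E (i.1+1))]
        simp
      rw [Finset.sum_congr rfl (fun j _ => hterm j)] at hev
      rw [Finset.sum_eq_single i] at hev
      · have hne : (F i.1 * E (i.1+1)).det ≠ 0 := hcons i.1 (by omega)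
        rcases mul_eq_zero.mp hev with h | h
        · exact h
        · exact absurd h hne
      · intro j _ hji
        rcases lt_or_gt_of_ne hji with h | h
        · rw [hj j h, zero_mul]
        · rw [hzero j.1 (i.1+1) (show i.1 + 1 ≤ j.1 from h) (by omega) (by omega), mul_zero]
      · intro h
        exact absurd (Finset.mem_univ i) h
    intro i
    have hall : ∀ k, ∀ i : Fin K, i.1 ≤ k → c i = 0 := by
      intro k
      induction k with
      | zero =>
          intro i hi
          exact key i (fun j hj => absurd (show j.1 < i.1 from hj) (by omega))
      | succ k ihk =>
          intro i hi
          exact key i (fun j hj => ihk j (by have := (show j.1 < i.1 from hj); omega))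
    exact hall i.1 i le_rfl
  have hli2 : LinearIndependent ℝ ((theta n r) ∘ (fun i : Fin K => psi n r (F i))) :=
    hli.map' (theta n r) (LinearMap.ker_eq_bot.mpr (theta_inj r))
  have hcard := hli2.fintype_card_le_finrank
  rw [finrank_fintype_fun_eq_card, Fintype.card_fin] at hcard
  calc K ≤ Fintype.card {s : Finset (Fin n) // s.card = r} := hcard
    _ ≤ Fintype.card (Finset (Fin n)) := Fintype.card_subtype_le _
    _ = 2 ^ n := by rw [Fintype.card_finset, Fintype.card_fin]







lemma chain'_map_range {R : Mat n → Mat n → Prop} (g : ℕ → Mat n) (k : ℕ)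
    (h : ∀ t, R (g t) (g (t+1))) : List.Chain' R ((List.range k).map g) := by
  rw [show List.Chain' R ((List.range k).map g) = List.IsChain R ((List.range k).map g) from rfl,
    List.isChain_map]
  cases k with
  | zero => simp
  | succ k => exact (List.isChain_range_succ _ k).mpr (fun t _ => h t)


lemma step (hn : 1 ≤ n) (S : Set (Mat n)) (L : ℕ) (hL : 1 ≤ L)
    (hlong : ∀ l : List (Mat n), (∀ M ∈ l, M ∈ S) → L ≤ l.length → l.prod.rank ≤ 1)
    (m r : ℕ) (hm : 1 ≤ m) (hr : 2 ≤ r)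
    (hpred : ∀ l : List (Mat n), (∀ M ∈ l, M ∈ S) → l.length = m → l.prod.rank ≤ r) :
    ∀ l : List (Mat n), (∀ M ∈ l, M ∈ S) → l.length = 2 ^ (n+1) * m →
      l.prod.rank ≤ r - 1 := by
  intro l hmem hlen
  by_contra hcon
  push_neg at hcon
  set N := 2 ^ (n+1) with hN
  have hN1 : 1 ≤ N := Nat.one_le_two_pow
  obtain ⟨f, hflen, hfl⟩ := chunk m N l (by rw [hlen]; ring)
  have hfmem : ∀ i, i < N → ∀ M ∈ f i, M ∈ S := by
    intro i hi M hM
    apply hmem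
    rw [hfl]
    exact List.mem_flatten.mpr ⟨f i, List.mem_map.mpr ⟨i, List.mem_range.mpr hi, rfl⟩, hM⟩
  set B : ℕ → Mat n := fun i => (f i).prod with hB
  have hlp : l.prod = (Pl B 0 N).prod := by
    rw [hfl, List.prod_flatten, List.map_map]
    unfold Pl
    rw [Nat.sub_zero]
    congr 1
    apply List.map_congr_left
    intro t _
    simp [hB]
  have hBle : ∀ i, i < N → (B i).rank ≤ r := fun i hi => hpred (f i) (hfmem i hi) (hflen i hi)
  have hler : l.prod.rank ≤ r := by
    rw [hlp]
    calc (Pl B 0 N).prod.rank ≤ (Pl B 0 1).prod.rank :=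
          Pl_rank_le B (le_refl 0) (by omega) (by omega)
      _ = (B 0).rank := by rw [show Pl B 0 1 = [B 0] from Pl_single B 0, List.prod_singleton]
      _ ≤ r := hBle 0 (by omega)
  have hreq : l.prod.rank = r := by omega
  have hseg : ∀ a b, a ≤ b → b ≤ N → r ≤ (Pl B a b).prod.rank := by
    intro a b hab hbN
    calc r = l.prod.rank := hreq.symm
      _ = (Pl B 0 N).prod.rank := by rw [hlp]
      _ ≤ (Pl B a b).prod.rank := Pl_rank_le B (Nat.zero_le a) hab hbN
  have hBrank : ∀ i, i < N → (B i).rank = r := by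
    intro i hi
    have h1 := hseg i (i+1) (by omega) (by omega)
    rw [Pl_single, List.prod_singleton] at h1
    exact le_antisymm (hBle i hi) h1
  have hBcons : ∀ i, i + 1 < N → (B i * B (i+1)).rank = r := by
    intro i hi
    have h1 := hseg i (i+2) (by omega) (by omega)
    rw [Pl_pair_prod] at h1
    exact le_antisymm (le_trans (Matrix.rank_mul_le_left _ _) (hBle i (by omega))) h1
  have hBloop : ∀ a b, b ≤ a → a < N → (B a * B b).rank ≠ r := by
    intro a b hba haN hcontra
    set p := a + 1 - b with hp
    have hp1 : 1 ≤ p := by omega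
    have hidx : ∀ t, b + t % p ≤ a := by
      intro t; have := Nat.mod_lt t (show 0 < p by omega); omega
    set g : ℕ → Mat n := fun t => B (b + t % p) with hg
    have hgpair : ∀ t, (g t * g (t+1)).rank = r := by
      intro t
      by_cases hq : t % p = p - 1
      · have h1 : b + t % p = a := by omega
        have h2 : (t + 1) % p = 0 := by
          rcases Nat.eq_or_lt_of_le hp1 with h | h
          · simp [← h, Nat.mod_one]
          · rw [Nat.add_mod, hq, Nat.mod_eq_of_lt h, show p - 1 + 1 = p by omega,
              Nat.mod_self]
        simp only [hg]
        rw [h1, h2, Nat.add_zero]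
        exact hcontra
      · have hlt : t % p < p - 1 := by
          have := Nat.mod_lt t (show 0 < p by omega); omega
        have h2 : (t + 1) % p = t % p + 1 := by
          rw [Nat.add_mod, Nat.mod_eq_of_lt (show (1:ℕ) < p by omega)]
          exact Nat.mod_eq_of_lt (by omega)
        simp only [hg]
        rw [h2, ← Nat.add_assoc]
        exact hBcons (b + t % p) (by have := hidx t; omega)
    set w : List (Mat n) := (List.range L).map g with hw
    have hwlen : w.length = L := by rw [hw]; simp
    have hwne : w ≠ [] := by
      intro h; rw [h] at hwlen; simp at hwlen; omega
    have hwchain : List.Chain' (fun X Y => (X * Y).rank = r) w := by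
      rw [hw]
      exact chain'_map_range g L hgpair
    have hwrank : ∀ X ∈ w, X.rank = r := by
      intro X hX
      rw [hw] at hX
      obtain ⟨t, _, rfl⟩ := List.mem_map.mp hX
      exact hBrank _ (by have := hidx t; omega)
    have hwprod : w.prod.rank = r := chain'_prod_rank r w hwne hwrank hwchain
    have hblocks : ∀ X ∈ w, ∃ wb : List (Mat n),
        (∀ M ∈ wb, M ∈ S) ∧ wb.length = m ∧ wb.prod = X := by
      intro X hX
      rw [hw] at hX
      obtain ⟨t, _, rfl⟩ := List.mem_map.mp hX
      refine ⟨f (b + t % p), hfmem _ ?_, hflen _ ?_, rfl⟩ <;>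
        (have := hidx t; omega)
    obtain ⟨wb, hwbmem, hwblen, hwbprod⟩ := concat_blocks S m w hblocks
    have hle1 : wb.prod.rank ≤ 1 := by
      apply hlong wb hwbmem
      rw [hwblen, hwlen]
      calc L = 1 * L := (one_mul L).symm
        _ ≤ m * L := Nat.mul_le_mul_right L hm
    rw [hwbprod, hwprod] at hle1
    omega
  have hfact : ∀ i, ∃ (Ei : Matrix (Fin n) (Fin r) ℝ) (Fi : Matrix (Fin r) (Fin n) ℝ),
      i < N → (B i = Ei * Fi ∧ Function.Injective Ei.mulVecLin ∧
        Function.Surjective Fi.mulVecLin) := by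
    intro i
    by_cases h : i < N
    · obtain ⟨Ei, Fi, h1, h2, h3⟩ := rank_factorization (B i) (hBrank i h)
      exact ⟨Ei, Fi, fun _ => ⟨h1, h2, h3⟩⟩
    · exact ⟨0, 0, fun hc => absurd hc h⟩
  choose E F hEF using hfact
  have hrankEF : ∀ a b, a < N → b < N → (B a * B b).rank = (F a * E b).rank := by
    intro a b ha hb
    obtain ⟨hfa, hain, _⟩ := hEF a ha
    obtain ⟨hfb, _, hbsur⟩ := hEF b hb
    rw [hfa, hfb]
    rw [show (E a * F a) * (E b * F b) = E a * ((F a * E b) * F b) by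
      rw [Matrix.mul_assoc, Matrix.mul_assoc]]
    rw [rank_mul_inj _ _ hain, rank_mul_surj _ _ hbsur]
  have hdetc : ∀ i, i + 1 < N → (F i * E (i+1)).det ≠ 0 := by
    intro i hi
    exact (det_ne_zero_iff_rank _).mpr
      (by rw [← hrankEF i (i+1) (by omega) hi]; exact hBcons i hi)
  have hdet0 : ∀ a b, b ≤ a → a < N → b < N → (F a * E b).det = 0 := by
    intro a b hba ha hb
    by_contra hd
    have hd2 := (det_ne_zero_iff_rank _).mp hd
    exact hBloop a b hba ha (by rw [hrankEF a b ha hb]; exact hd2)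
  have hfin := card_bound E F hdetc hdet0
  have h2n : 2 ≤ 2 ^ n := by
    calc (2:ℕ) = 2^1 := rfl
      _ ≤ 2^n := Nat.pow_le_pow_right (by norm_num) hn
  have hps : (2:ℕ)^(n+1) = 2^n * 2 := pow_succ 2 n
  omega

end RankOneProd

theorem rank_le_one_products_bound
    (n : ℕ) (S : Set (Matrix (Fin n) (Fin n) ℝ))
    (hlong : ∃ L : ℕ, 1 ≤ L ∧ ∀ l : List (Matrix (Fin n) (Fin n) ℝ),
      (∀ M ∈ l, M ∈ S) → l.length = L → l.prod.rank ≤ 1) :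
    ∀ l : List (Matrix (Fin n) (Fin n) ℝ),
      (∀ M ∈ l, M ∈ S) → l.length = 2 ^ (n ^ 2 - 1) → l.prod.rank ≤ 1 := by
  obtain ⟨L, hL1, hlongL⟩ := hlong
  by_cases hn : n ≤ 1
  · intro l hm hlen
    calc l.prod.rank ≤ Fintype.card (Fin n) := Matrix.rank_le_card_width _
      _ ≤ 1 := by rw [Fintype.card_fin]; omega
  · push_neg at hn
    have hn1 : 1 ≤ n := by omega
    have hlong' := RankOneProd.long_prods S L hlongL
    have main : ∀ j, j ≤ n - 1 → ∀ l : List (Matrix (Fin n) (Fin n) ℝ),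
        (∀ M ∈ l, M ∈ S) → l.length = (2^(n+1))^j → l.prod.rank ≤ n - j := by
      intro j
      induction j with
      | zero =>
          intro _ l hm hlen
          rw [pow_zero] at hlen
          obtain ⟨X, rfl⟩ := List.length_eq_one_iff.mp hlen
          rw [List.prod_singleton, Nat.sub_zero]
          calc X.rank ≤ Fintype.card (Fin n) := Matrix.rank_le_card_width _
            _ = n := Fintype.card_fin n
      | succ j ih =>
          intro hj l hm hlen
          have hstep := RankOneProd.step hn1 S L hL1 hlong' ((2^(n+1))^j) (n - j)
            (Nat.one_le_pow _ _ (by positivity)) (by omega) (ih (by omega)) l hm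
            (by rw [hlen, pow_succ]; ring)
          omega
    intro l hm hlen
    have hnum : 2 ^ (n^2 - 1) = (2^(n+1))^(n-1) := by
      rw [← pow_mul]
      congr 1
      rw [pow_two]
      obtain ⟨k, rfl⟩ : ∃ k, n = k + 1 := ⟨n - 1, by omega⟩
      rw [Nat.add_sub_cancel]
      have e1 : (k+1)*(k+1) = k*k+2*k+1 := by ring
      have e2 : (k+1+1)*k = k*k+2*k := by ring
      rw [e1, e2]
      omega
    have hmain := main (n-1) le_rfl l hm (by rw [hlen]; exact hnum)
    have hfix : n - (n - 1) = 1 := by omega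
    omega
end

section
/- Let φ : A* → M_n(ℝ) be a monoid morphism on a finite alphabet A. If there exists k ≥ 1 such that φ(w) has rank at most 1 for every word w of length k, then φ(w) has rank at most 1 for every word w of length K = 2^(n²-1); moreover the minimal such k satisfies k ≤ 2^(n²-1). -/
namespace RankOneAux

open Matrix Module Submodule


variable {n : ℕ}

noncomputable def Dmat (M : Matrix (Fin n) (Fin n) ℝ) :
    Matrix (Fin n × Fin n) (Fin n × Fin n) ℝ :=
  fun p q => (M p.1 q.1 * M p.2 q.2 - M p.1 q.2 * M p.2 q.1) / 2

lemma Dmat_mul (M N : Matrix (Fin n) (Fin n) ℝ) :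
    Dmat (M * N) = Dmat M * Dmat N := by
  ext ⟨i, j⟩ ⟨k, l⟩
  simp only [Dmat, Matrix.mul_apply, Fintype.sum_prod_type]
  have h1 : ∑ p : Fin n, ∑ q : Fin n, (M i p * N p k) * (M j q * N q l)
      = (∑ x : Fin n, M i x * N x k) * (∑ x : Fin n, M j x * N x l) :=
    (Finset.sum_mul_sum _ _ _ _).symm
  have h2 : ∑ p : Fin n, ∑ q : Fin n, (M i p * N p l) * (M j q * N q k)
      = (∑ x : Fin n, M i x * N x l) * (∑ x : Fin n, M j x * N x k) :=
    (Finset.sum_mul_sum _ _ _ _).symm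
  have h3 : ∑ p : Fin n, ∑ q : Fin n, (M j p * N p k) * (M i q * N q l)
      = (∑ x : Fin n, M j x * N x k) * (∑ x : Fin n, M i x * N x l) :=
    (Finset.sum_mul_sum _ _ _ _).symm
  have h4 : ∑ p : Fin n, ∑ q : Fin n, (M j p * N p l) * (M i q * N q k)
      = (∑ x : Fin n, M j x * N x l) * (∑ x : Fin n, M i x * N x k) :=
    (Finset.sum_mul_sum _ _ _ _).symm
  have hpt : ∀ p q : Fin n,
      (M i p * M j q - M i q * M j p) / 2 * ((N p k * N q l - N p l * N q k) / 2)
      = (M i p * N p k) * (M j q * N q l) / 4 - (M i p * N p l) * (M j q * N q k) / 4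
        - (M j p * N p k) * (M i q * N q l) / 4 + (M j p * N p l) * (M i q * N q k) / 4 := by
    intros; ring
  have expand : ∑ p : Fin n, ∑ q : Fin n,
      (M i p * M j q - M i q * M j p) / 2 * ((N p k * N q l - N p l * N q k) / 2)
      = (∑ p : Fin n, ∑ q : Fin n, (M i p * N p k) * (M j q * N q l)) / 4
        - (∑ p : Fin n, ∑ q : Fin n, (M i p * N p l) * (M j q * N q k)) / 4
        - (∑ p : Fin n, ∑ q : Fin n, (M j p * N p k) * (M i q * N q l)) / 4
        + (∑ p : Fin n, ∑ q : Fin n, (M j p * N p l) * (M i q * N q k)) / 4 := by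
    simp only [hpt, Finset.sum_sub_distrib, Finset.sum_add_distrib, ← Finset.sum_div]
  rw [expand, h1, h2, h3, h4]; ring

lemma minors_of_rank_le_one {M : Matrix (Fin n) (Fin n) ℝ} (h : M.rank ≤ 1) :
    ∀ i j k l, M i k * M j l = M i l * M j k := by
  intro i j k l
  set W := LinearMap.range M.mulVecLin with hWdef
  have h' : finrank ℝ W ≤ 1 := h
  obtain ⟨v, hv⟩ := finrank_le_one_iff.mp h'
  have hW : ∀ c : Fin n, Mᵀ c ∈ W := fun c =>
    ⟨Pi.single c 1, by ext i; simp [Matrix.mulVecLin_apply]⟩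
  obtain ⟨a, ha⟩ := hv ⟨Mᵀ k, hW k⟩
  obtain ⟨b, hb⟩ := hv ⟨Mᵀ l, hW l⟩
  have hk : ∀ i', M i' k = a * (v : Fin n → ℝ) i' := by
    intro i'
    have h'' := congrFun (congrArg Subtype.val ha) i'
    simpa [mul_comm] using h''.symm
  have hl : ∀ i', M i' l = b * (v : Fin n → ℝ) i' := by
    intro i'
    have h'' := congrFun (congrArg Subtype.val hb) i'
    simpa [mul_comm] using h''.symm
  rw [hk i, hk j, hl i, hl j]; ring

lemma rank_le_one_of_minors {M : Matrix (Fin n) (Fin n) ℝ}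
    (h : ∀ i j k l, M i k * M j l = M i l * M j k) : M.rank ≤ 1 := by
  by_cases hM : M = 0
  · simp [hM]
  · have : ∃ i₀ k₀, M i₀ k₀ ≠ 0 := by
      by_contra hc
      push_neg at hc
      exact hM (by ext i k; simpa using hc i k)
    obtain ⟨i₀, k₀, h0⟩ := this
    have hne : Mᵀ k₀ ≠ 0 := by
      intro he
      exact h0 (by simpa using congrFun he i₀)
    have hle : LinearMap.range M.mulVecLin ≤ span ℝ {Mᵀ k₀} := by
      rw [Matrix.range_mulVecLin, span_le]
      rintro x ⟨c, rfl⟩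
      have : Mᵀ c = (M i₀ c / M i₀ k₀) • Mᵀ k₀ := by
        funext i
        have hm := h i i₀ c k₀
        simp only [Matrix.transpose_apply, Pi.smul_apply, smul_eq_mul]
        field_simp
        linarith [hm]
      rw [show M.col c = Mᵀ c from rfl, this]
      exact Submodule.smul_mem _ _ (subset_span rfl)
    calc M.rank ≤ finrank ℝ (span ℝ ({Mᵀ k₀} : Set (Fin n → ℝ))) :=
          Submodule.finrank_mono hle
      _ = 1 := finrank_span_singleton hne

lemma Dmat_eq_zero_of_rank_le_one {M : Matrix (Fin n) (Fin n) ℝ} (h : M.rank ≤ 1) :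
    Dmat M = 0 := by
  ext p q
  have := minors_of_rank_le_one h p.1 p.2 q.1 q.2
  simp [Dmat, sub_eq_zero, this]

lemma rank_le_one_of_Dmat_eq_zero {M : Matrix (Fin n) (Fin n) ℝ} (h : Dmat M = 0) :
    M.rank ≤ 1 := by
  apply rank_le_one_of_minors
  intro i j k l
  have := congrFun (congrFun h (i, j)) (k, l)
  simp only [Dmat, Matrix.zero_apply, div_eq_zero_iff] at this
  rcases this with h' | h'
  · linarith [sub_eq_zero.mp h']
  · norm_num at h'


lemma key {A : Type*} (φ : A → Matrix (Fin n) (Fin n) ℝ) {k : ℕ}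
    (hk : ∀ w : List A, w.length = k → ((w.map φ).prod).rank ≤ 1) :
    ∀ w : List A, w.length = n ^ 4 + 1 → ((w.map φ).prod).rank ≤ 1 := by
  set d := n ^ 4 with hd
  set V : ℕ → Submodule ℝ (Matrix (Fin n × Fin n) (Fin n × Fin n) ℝ) := fun j =>
    span ℝ {X | ∃ w : List A, j ≤ w.length ∧ X = Dmat ((w.map φ).prod)} with hV
  have hanti : ∀ a b : ℕ, a ≤ b → V b ≤ V a := by
    intro a b hab
    exact span_mono (fun X ⟨w, hw, e⟩ => ⟨w, le_trans hab hw, e⟩)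
  have hzero : ∀ w : List A, k ≤ w.length → Dmat ((w.map φ).prod) = 0 := by
    intro w hw
    have hsplit : (w.map φ).prod
        = ((w.take k).map φ).prod * ((w.drop k).map φ).prod := by
      rw [← List.prod_append, ← List.map_append, List.take_append_drop]
    have hlen : (w.take k).length = k := by
      rw [List.length_take]; omega
    rw [hsplit, Dmat_mul, Dmat_eq_zero_of_rank_le_one (hk _ hlen), zero_mul]
  have hVk : V k = ⊥ := by
    rw [eq_bot_iff, hV, span_le]
    rintro X ⟨w, hw, rfl⟩
    simp [hzero w hw]
  have hstep : ∀ j, V j = V (j + 1) → V (j + 1) = V (j + 2) := by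
    intro j hj
    refine le_antisymm ?_ (hanti _ _ (by omega))
    rw [hV, span_le]
    rintro X ⟨w, hw, rfl⟩
    cases w with
    | nil => simp at hw
    | cons a t =>
      have ht : Dmat ((t.map φ).prod) ∈ V j :=
        subset_span ⟨t, by simp at hw; omega, rfl⟩
      rw [hj] at ht
      have heq : Dmat (((a :: t).map φ).prod)
          = (LinearMap.mulLeft ℝ (Dmat (φ a))) (Dmat ((t.map φ).prod)) := by
        simp [List.map_cons, List.prod_cons, Dmat_mul, LinearMap.mulLeft_apply]
      rw [heq]
      have hmap : Submodule.map (LinearMap.mulLeft ℝ (Dmat (φ a))) (V (j + 1)) ≤ V (j + 2) := by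
        rw [hV, Submodule.map_span, span_le]
        rintro Y ⟨Z, ⟨u, hu, rfl⟩, rfl⟩
        refine subset_span ⟨a :: u, by simp; omega, ?_⟩
        simp [List.map_cons, List.prod_cons, Dmat_mul, LinearMap.mulLeft_apply]
      exact hmap (Submodule.mem_map_of_mem ht)
  have hconst : ∀ j, V j = V (j + 1) → ∀ m, j ≤ m → V m = V j := by
    intro j hj
    have hsucc : ∀ m, j ≤ m → V m = V (m + 1) :=
      Nat.le_induction hj (fun m hm ih => hstep m ih)
    intro m hm
    induction m, hm using Nat.le_induction with
    | base => rfl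
    | succ m hm ih => rw [← (hsucc m hm), ih]
  have hdim : finrank ℝ (Matrix (Fin n × Fin n) (Fin n × Fin n) ℝ) = d := by
    rw [Module.finrank_matrix]
    simp [Fintype.card_prod, hd]
    ring
  have hstall : ∃ j, 1 ≤ j ∧ j ≤ d + 1 ∧ V j = V (j + 1) := by
    by_contra hc
    push_neg at hc
    have hlt : ∀ j, 1 ≤ j → j ≤ d + 1 → finrank ℝ (V (j + 1)) < finrank ℝ (V j) := by
      intro j h1 h2
      exact Submodule.finrank_lt_finrank_of_lt
        (lt_of_le_of_ne (hanti j (j + 1) (by omega)) (fun e => hc j h1 h2 e.symm))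
    have hbound : ∀ j, j ≤ d + 1 → finrank ℝ (V (j + 1)) + j ≤ d := by
      intro j
      induction j with
      | zero =>
        intro _
        simpa [hdim] using (hdim ▸ Submodule.finrank_le (V 1) :
          finrank ℝ (V 1) ≤ d)
      | succ i ih =>
        intro hle
        have h1 := hlt (i + 1) (by omega) hle
        have h2 := ih (by omega)
        omega
    have := hbound (d + 1) le_rfl
    have := hlt (d + 1) (by omega) le_rfl
    omega
  obtain ⟨j, hj1, hjd, hjeq⟩ := hstall
  have hVj : V j = ⊥ := by
    rcases le_or_gt k j with hkj | hjk
    · exact le_bot_iff.mp (hVk ▸ hanti k j hkj)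
    · exact (hconst j hjeq k (le_of_lt hjk)).symm.trans hVk
  have hVfin : V (d + 1) = ⊥ := (hconst j hjeq (d + 1) hjd).trans hVj
  intro w hw
  apply rank_le_one_of_Dmat_eq_zero
  have : Dmat ((w.map φ).prod) ∈ V (d + 1) := subset_span ⟨w, by omega, rfl⟩
  rw [hVfin] at this
  simpa using this


lemma pow_ineq : ∀ m : ℕ, 9 ≤ m → m ^ 2 + 1 ≤ 2 ^ (m - 1) := by
  intro m hm
  induction m, hm using Nat.le_induction with
  | base => norm_num
  | succ m hm ih =>
    have h1 : (m + 1) ^ 2 + 1 ≤ 2 * (m ^ 2 + 1) := by nlinarith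
    have h2 : 2 * 2 ^ (m - 1) = 2 ^ m := by
      rw [← pow_succ']
      congr 1
      omega
    calc (m + 1) ^ 2 + 1 ≤ 2 * (m ^ 2 + 1) := h1
      _ ≤ 2 * 2 ^ (m - 1) := by omega
      _ = 2 ^ m := h2
      _ = 2 ^ (m + 1 - 1) := by simp

lemma mono {A : Type*} (φ : A → Matrix (Fin n) (Fin n) ℝ) {k m : ℕ} (hkm : k ≤ m)
    (hk : ∀ w : List A, w.length = k → ((w.map φ).prod).rank ≤ 1) :
    ∀ w : List A, w.length = m → ((w.map φ).prod).rank ≤ 1 := by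
  intro w hw
  have hsplit : (w.map φ).prod = ((w.take k).map φ).prod * ((w.drop k).map φ).prod := by
    rw [← List.prod_append, ← List.map_append, List.take_append_drop]
  rw [hsplit]
  exact le_trans (Matrix.rank_mul_le_left _ _)
    (hk _ (by rw [List.length_take]; omega))

lemma small_rank (hn : n ≤ 1) (M : Matrix (Fin n) (Fin n) ℝ) : M.rank ≤ 1 :=
  le_trans (Matrix.rank_le_card_width M) (by simpa using hn)

lemma case_two {A : Type*} (φ : A → Matrix (Fin 2) (Fin 2) ℝ) {k : ℕ} (hk1 : 1 ≤ k)
    (hk : ∀ w : List A, w.length = k → ((w.map φ).prod).rank ≤ 1) (a : A) :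
    (φ a).rank ≤ 1 := by
  have hrep : ((List.replicate k a).map φ).prod = (φ a) ^ k := by
    rw [List.map_replicate, List.prod_replicate]
  have hr : ((φ a) ^ k).rank ≤ 1 := by
    have := hk (List.replicate k a) (by simp)
    rwa [hrep] at this
  have hdet : (φ a).det ^ k = 0 := by
    rw [← Matrix.det_pow]
    have hm := minors_of_rank_le_one hr 0 1 0 1
    rw [Matrix.det_fin_two]
    linarith
  have hdet0 : (φ a).det = 0 := pow_eq_zero_iff (by omega) |>.mp hdet
  rw [Matrix.det_fin_two] at hdet0
  apply rank_le_one_of_minors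
  have hcase : ∀ x : Fin 2, x = 0 ∨ x = 1 := by decide
  intro i j k' l
  rcases hcase i with rfl | rfl <;> rcases hcase j with rfl | rfl <;>
    rcases hcase k' with rfl | rfl <;> rcases hcase l with rfl | rfl <;>
    first | ring1 | linear_combination hdet0 | linear_combination -hdet0


end RankOneAux

theorem morphism_rank_le_one_bound
    (A : Type*) [Fintype A] (n : ℕ) (φ : A → Matrix (Fin n) (Fin n) ℝ)
    (h : ∃ k : ℕ, 1 ≤ k ∧ ∀ w : List A, w.length = k → ((w.map φ).prod).rank ≤ 1) :
    (∀ w : List A, w.length = 2 ^ (n ^ 2 - 1) → ((w.map φ).prod).rank ≤ 1) ∧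
    ∃ k₀ : ℕ, 1 ≤ k₀ ∧ k₀ ≤ 2 ^ (n ^ 2 - 1) ∧
      (∀ w : List A, w.length = k₀ → ((w.map φ).prod).rank ≤ 1) ∧
      ∀ k' : ℕ, 1 ≤ k' →
        (∀ w : List A, w.length = k' → ((w.map φ).prod).rank ≤ 1) → k₀ ≤ k' := by
  classical
  obtain ⟨k, hk1, hk⟩ := h
  have hL1 : 1 ≤ 2 ^ (n ^ 2 - 1) := Nat.one_le_two_pow
  have hwit : ∃ m, (1 ≤ m ∧ ∀ w : List A, w.length = m → ((w.map φ).prod).rank ≤ 1)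
      ∧ m ≤ 2 ^ (n ^ 2 - 1) := by
    rcases le_or_gt n 1 with hn | hn
    · exact ⟨1, ⟨le_rfl, fun w _ => RankOneAux.small_rank hn _⟩, hL1⟩
    rcases eq_or_lt_of_le (show 2 ≤ n from hn) with hn2 | hn3
    · -- n = 2
      subst hn2
      refine ⟨1, ⟨le_rfl, ?_⟩, hL1⟩
      intro w hw
      match w, hw with
      | [a], _ => simpa using RankOneAux.case_two φ hk1 hk a
    · -- n ≥ 3
      refine ⟨n ^ 4 + 1, ⟨by omega, RankOneAux.key φ hk⟩, ?_⟩
      have h9 : 9 ≤ n ^ 2 := by nlinarith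
      have := RankOneAux.pow_ineq (n ^ 2) h9
      have hpow : n ^ 4 = (n ^ 2) ^ 2 := by ring
      omega
  have hexQ : ∃ m, 1 ≤ m ∧ ∀ w : List A, w.length = m → ((w.map φ).prod).rank ≤ 1 :=
    ⟨hwit.choose, hwit.choose_spec.1⟩
  have hspec := Nat.find_spec hexQ
  have hk₀L : Nat.find hexQ ≤ 2 ^ (n ^ 2 - 1) :=
    le_trans (Nat.find_min' hexQ hwit.choose_spec.1) hwit.choose_spec.2
  exact ⟨RankOneAux.mono φ hk₀L hspec.2, Nat.find hexQ, hspec.1, hk₀L, hspec.2,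
    fun k' h1 hp => Nat.find_min' hexQ ⟨h1, hp⟩⟩
end

section
/- Let (λ, φ, γ) be a nonnegative linear representation of π : A* → ℝ and suppose γ' ∈ ℝ^n is a nonnegative vector with M γ' = γ' (where M = Σ_a φ(a)) and λ φ(w) γ' = λ φ(w) γ for all w. If γ' has all entries positive and D is the diagonal matrix with D_{ii} = γ'_i, then the triple (λD, ψ, D^{-1}γ') with ψ(w) = D^{-1} φ(w) D is an equivalent nonnegative representation of π in which Σ_a ψ(a) is stochastic and D^{-1}γ' is the all-ones vector. -/
/-!
Conjugating by the positive diagonal matrix `D = diag γ'` is a similarity, so the word products of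
`ψ` are `D⁻¹ φ(w) D` and the new triple computes `λ φ(w) γ'`, which equals `π w` by hypothesis.
The row sums of `D⁻¹ M D` are `(M γ')_i / γ'_i = 1` because `γ'` is a fixed point of `M`.
-/

open Matrix

theorem List.prod_map_mul_mul_of_mul_eq_one {α M : Type*} [Monoid M] {P Q : M}
    (hPQ : P * Q = 1) (hQP : Q * P = 1) (f : α → M) (w : List α) :
    (w.map fun a => Q * f a * P).prod = Q * (w.map f).prod * P := by
  induction w with
  | nil => simpa using hQP.symm
  | cons a w ih =>
    rw [List.map_cons, List.prod_cons, ih, List.map_cons, List.prod_cons]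
    simp only [mul_assoc]
    rw [← mul_assoc P Q, hPQ, one_mul]

namespace Matrix

variable {m K : Type*} [Fintype m] [DecidableEq m]

section Field

variable [Field K] {d : m → K}

theorem diagonal_mul_diagonal_inv (hd : ∀ i, d i ≠ 0) : diagonal d * diagonal d⁻¹ = 1 := by
  rw [diagonal_mul_diagonal, ← diagonal_one]
  exact congrArg diagonal (funext fun i => mul_inv_cancel₀ (hd i))

theorem diagonal_inv_mul_diagonal (hd : ∀ i, d i ≠ 0) : diagonal d⁻¹ * diagonal d = 1 := by
  rw [diagonal_mul_diagonal, ← diagonal_one]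
  exact congrArg diagonal (funext fun i => inv_mul_cancel₀ (hd i))

theorem diagonal_inv_mulVec_self (hd : ∀ i, d i ≠ 0) : diagonal d⁻¹ *ᵥ d = fun _ => 1 :=
  funext fun i => by rw [mulVec_diagonal, Pi.inv_apply, inv_mul_cancel₀ (hd i)]

theorem diagonal_inv_mul_mul_diagonal_apply (B : Matrix m m K) (i j : m) :
    (diagonal d⁻¹ * B * diagonal d) i j = (d i)⁻¹ * B i j * d j := by
  rw [mul_diagonal, diagonal_mul, Pi.inv_apply]

theorem sum_diagonal_inv_mul_mul_diagonal_apply (B : Matrix m m K) (i : m) :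
    ∑ j, (diagonal d⁻¹ * B * diagonal d) i j = (d i)⁻¹ * (B *ᵥ d) i := by
  simp only [diagonal_inv_mul_mul_diagonal_apply, mulVec, dotProduct, Finset.mul_sum, mul_assoc]

theorem sum_row_diagonal_inv_mul_mul_diagonal_eq_one {B : Matrix m m K} (hd : ∀ i, d i ≠ 0)
    (hfix : B *ᵥ d = d) (i : m) : ∑ j, (diagonal d⁻¹ * B * diagonal d) i j = 1 := by
  rw [sum_diagonal_inv_mul_mul_diagonal_apply, hfix, inv_mul_cancel₀ (hd i)]

end Field

theorem vecMul_conj_dotProduct_mulVec {R : Type*} [CommSemiring R] {D E : Matrix m m R}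
    (hDE : D * E = 1) (l v : m → R) (B : Matrix m m R) :
    (l ᵥ* D) ᵥ* (E * B * D) ⬝ᵥ (E *ᵥ v) = l ᵥ* B ⬝ᵥ v := by
  rw [dotProduct_mulVec, vecMul_vecMul, vecMul_vecMul]
  simp only [← mul_assoc]
  rw [hDE, one_mul, mul_assoc, hDE, mul_one]

theorem diagonal_inv_mul_mul_diagonal_nonneg [Field K] [LinearOrder K] [IsStrictOrderedRing K]
    {d : m → K} (hd : ∀ i, 0 < d i) {B : Matrix m m K} (hB : ∀ i j, 0 ≤ B i j) (i j : m) :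
    0 ≤ (diagonal d⁻¹ * B * diagonal d) i j := by
  rw [diagonal_inv_mul_mul_diagonal_apply]
  exact mul_nonneg (mul_nonneg (inv_nonneg.2 (hd i).le) (hB i j)) (hd j).le

end Matrix

theorem diagonal_conjugation_stochastic_general
    (A : Type*) [Fintype A] (n : ℕ)
    (l γ γ' : Fin n → ℝ) (φ : A → Matrix (Fin n) (Fin n) ℝ)
    (π : List A → ℝ)
    (hπ : ∀ w : List A, π w = l ᵥ* (w.map φ).prod ⬝ᵥ γ)
    (hφ0 : ∀ (a : A) i j, 0 ≤ φ a i j)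
    (hγ' : ∀ i, 0 < γ' i)
    (hfix : (∑ a, φ a) *ᵥ γ' = γ')
    (heq : ∀ w : List A, l ᵥ* (w.map φ).prod ⬝ᵥ γ' = l ᵥ* (w.map φ).prod ⬝ᵥ γ) :
    let D : Matrix (Fin n) (Fin n) ℝ := Matrix.diagonal γ'
    let Dinv : Matrix (Fin n) (Fin n) ℝ := Matrix.diagonal fun i => (γ' i)⁻¹
    let ψ : A → Matrix (Fin n) (Fin n) ℝ := fun a => Dinv * φ a * D
    (∀ w : List A, (l ᵥ* D) ᵥ* (w.map ψ).prod ⬝ᵥ (Dinv *ᵥ γ') = π w) ∧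
    (∀ (a : A) i j, 0 ≤ ψ a i j) ∧
    (∀ i j, 0 ≤ (∑ a, ψ a) i j) ∧
    (∀ i, ∑ j, (∑ a, ψ a) i j = 1) ∧
    (Dinv *ᵥ γ') = fun _ => (1 : ℝ) := by
  intro D Dinv ψ
  have hne : ∀ i, γ' i ≠ 0 := fun i => (hγ' i).ne'
  have hDDinv : D * Dinv = 1 := diagonal_mul_diagonal_inv hne
  have hsum : ∑ a, ψ a = Dinv * (∑ a, φ a) * D := by
    simp only [ψ, Finset.mul_sum, Finset.sum_mul]
  have hψ0 : ∀ a i j, 0 ≤ ψ a i j := fun a => diagonal_inv_mul_mul_diagonal_nonneg hγ' (hφ0 a)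
  refine ⟨fun w => ?_, hψ0, fun i j => ?_, fun i => ?_, diagonal_inv_mulVec_self hne⟩
  · rw [List.prod_map_mul_mul_of_mul_eq_one hDDinv (diagonal_inv_mul_diagonal hne),
      vecMul_conj_dotProduct_mulVec hDDinv, heq, hπ]
  · rw [Matrix.sum_apply]
    exact Finset.sum_nonneg fun a _ => hψ0 a i j
  · rw [hsum]
    exact sum_row_diagonal_inv_mul_mul_diagonal_eq_one hne hfix i

theorem diagonal_conjugation_stochastic
    (A : Type*) [Fintype A] (n : ℕ)
    (l γ γ' : Fin n → ℝ) (φ : A → Matrix (Fin n) (Fin n) ℝ)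
    (π : List A → ℝ)
    (hπ : ∀ w : List A, π w = l ᵥ* (w.map φ).prod ⬝ᵥ γ)
    (hl0 : ∀ i, 0 ≤ l i) (hγ0 : ∀ i, 0 ≤ γ i)
    (hφ0 : ∀ (a : A) i j, 0 ≤ φ a i j)
    (hγ' : ∀ i, 0 < γ' i)
    (hfix : (∑ a, φ a) *ᵥ γ' = γ')
    (heq : ∀ w : List A, l ᵥ* (w.map φ).prod ⬝ᵥ γ' = l ᵥ* (w.map φ).prod ⬝ᵥ γ) :
    let D : Matrix (Fin n) (Fin n) ℝ := Matrix.diagonal γ'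
    let Dinv : Matrix (Fin n) (Fin n) ℝ := Matrix.diagonal fun i => (γ' i)⁻¹
    let ψ : A → Matrix (Fin n) (Fin n) ℝ := fun a => Dinv * φ a * D
    (∀ w : List A, (l ᵥ* D) ᵥ* (w.map ψ).prod ⬝ᵥ (Dinv *ᵥ γ') = π w) ∧
    (∀ (a : A) i j, 0 ≤ ψ a i j) ∧
    (∀ i j, 0 ≤ (∑ a, ψ a) i j) ∧
    (∀ i, ∑ j, (∑ a, ψ a) i j = 1) ∧
    (Dinv *ᵥ γ') = fun _ => (1 : ℝ) :=
  diagonal_conjugation_stochastic_general A n l γ γ' φ π hπ hφ0 hγ' hfix heq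
end
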